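/- arXiv:1303.4844 — 9 statements merged into one kernel-verified Lean document; each statement's English description precedes it below -/
import Mathlib

section
/- Let D = diag(−1, 1/3, 1/3, 1/3) ∈ M₄(ℂ). For all matrices A, B ∈ M₄(ℂ) satisfying A·B − B·A = D, one has ‖A‖_F · ‖B‖_F ≥ 4/3, where ‖·‖_F denotes the Frobenius (Hilbert–Schmidt) norm ‖A‖_F = (∑_{i,j} |a_{ij}|²)^{1/2}. In particular, if additionally ‖A‖_F = ‖B‖_F, then ‖A‖_F ≥ √(4/3). -/
set_option maxHeartbeats 1000000

private lemma sum_normsq (f : Fin 3 → ℂ) :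
    ∑ i, f i * (starRingEnd ℂ) (f i) = ((∑ i, ‖f i‖ ^ 2 : ℝ) : ℂ) := by
  push_cast
  refine Finset.sum_congr rfl fun i _ => ?_
  rw [Complex.mul_conj']

private lemma rowid (a w : Fin 3 → ℂ) (hws : ∑ j, w j * (starRingEnd ℂ) (w j) = 1) :
    ∑ j, ‖a j - (∑ k, a k * w k) * (starRingEnd ℂ) (w j)‖ ^ 2
      = ∑ j, ‖a j‖ ^ 2 - ‖∑ k, a k * w k‖ ^ 2 := by
  have key : ∑ j, (a j - (∑ k, a k * w k) * (starRingEnd ℂ) (w j)) *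
        (starRingEnd ℂ) (a j - (∑ k, a k * w k) * (starRingEnd ℂ) (w j))
      = ∑ j, a j * (starRingEnd ℂ) (a j)
        - (∑ k, a k * w k) * (starRingEnd ℂ) (∑ k, a k * w k) := by
    simp only [map_sub, map_add, map_mul, map_sum, Complex.conj_conj, Fin.sum_univ_three]
      at hws ⊢
    linear_combination ((a 0 * w 0 + a 1 * w 1 + a 2 * w 2) *
      ((starRingEnd ℂ) (a 0) * (starRingEnd ℂ) (w 0) + (starRingEnd ℂ) (a 1) * (starRingEnd ℂ) (w 1)
        + (starRingEnd ℂ) (a 2) * (starRingEnd ℂ) (w 2))) * hws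
  have h1 := sum_normsq (fun j => a j - (∑ k, a k * w k) * (starRingEnd ℂ) (w j))
  have h2 := sum_normsq a
  rw [h1, h2] at key
  have key2 : ((∑ j, ‖a j - (∑ k, a k * w k) * (starRingEnd ℂ) (w j)‖ ^ 2 : ℝ) : ℂ)
      = ((∑ j, ‖a j‖ ^ 2 - ‖∑ k, a k * w k‖ ^ 2 : ℝ) : ℂ) := by
    rw [key]; push_cast
    rw [Complex.mul_conj']
  exact_mod_cast key2

private lemma ccs (f g : Fin 3 → ℂ) :
    ‖∑ i, f i * g i‖ ≤ Real.sqrt (∑ i, ‖f i‖ ^ 2) * Real.sqrt (∑ i, ‖g i‖ ^ 2) := by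
  calc ‖∑ i, f i * g i‖ ≤ ∑ i, ‖f i‖ * ‖g i‖ := by
        refine (norm_sum_le _ _).trans ?_
        exact le_of_eq (Finset.sum_congr rfl fun i _ => norm_mul _ _)
    _ ≤ _ := Real.sum_mul_le_sqrt_mul_sqrt _ _ _

private lemma colcs (m w : Fin 3 → ℂ) (hw : ∑ i, ‖w i‖ ^ 2 = 1) :
    ‖∑ i, (starRingEnd ℂ) (w i) * m i‖ ^ 2 ≤ ∑ i, ‖m i‖ ^ 2 := by
  have h := ccs (fun i => (starRingEnd ℂ) (w i)) m
  have h2 : ∑ i, ‖(starRingEnd ℂ) (w i)‖ ^ 2 = 1 := by simpa using hw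
  rw [h2, Real.sqrt_one, one_mul] at h
  calc ‖∑ i, (starRingEnd ℂ) (w i) * m i‖ ^ 2
      ≤ Real.sqrt (∑ i, ‖m i‖ ^ 2) ^ 2 := pow_le_pow_left₀ (norm_nonneg _) h 2
    _ = _ := Real.sq_sqrt (by positivity)

private lemma matBound (M : Matrix (Fin 3) (Fin 3) ℂ) (w : Fin 3 → ℂ)
    (hw : ∑ i, ‖w i‖ ^ 2 = 1) :
    (∑ j, ‖(∑ i, (starRingEnd ℂ) (w i) * M i j)
        - (∑ p, ∑ q, (starRingEnd ℂ) (w p) * M p q * w q) * (starRingEnd ℂ) (w j)‖ ^ 2)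
      + ∑ i, ‖∑ j, M i j * w j‖ ^ 2 ≤ ∑ i, ∑ j, ‖M i j‖ ^ 2 := by
  have hws : ∑ j, w j * (starRingEnd ℂ) (w j) = 1 := by
    rw [sum_normsq]; exact_mod_cast congrArg (Complex.ofReal) hw
  -- the projected matrix N
  set N : Matrix (Fin 3) (Fin 3) ℂ :=
    fun i j => M i j - (∑ k, M i k * w k) * (starRingEnd ℂ) (w j) with hN
  -- step A : column representation + colcs
  have hrep : ∀ j, (∑ i, (starRingEnd ℂ) (w i) * M i j)
        - (∑ p, ∑ q, (starRingEnd ℂ) (w p) * M p q * w q) * (starRingEnd ℂ) (w j)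
      = ∑ i, (starRingEnd ℂ) (w i) * N i j := by
    intro j
    simp only [hN, Fin.sum_univ_three]
    ring
  have hA : ∀ j, ‖(∑ i, (starRingEnd ℂ) (w i) * M i j)
        - (∑ p, ∑ q, (starRingEnd ℂ) (w p) * M p q * w q) * (starRingEnd ℂ) (w j)‖ ^ 2
      ≤ ∑ i, ‖N i j‖ ^ 2 := by
    intro j; rw [hrep j]; exact colcs _ w hw
  have hAsum : (∑ j, ‖(∑ i, (starRingEnd ℂ) (w i) * M i j)
        - (∑ p, ∑ q, (starRingEnd ℂ) (w p) * M p q * w q) * (starRingEnd ℂ) (w j)‖ ^ 2)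
      ≤ ∑ j, ∑ i, ‖N i j‖ ^ 2 :=
    Finset.sum_le_sum fun j _ => hA j
  have hswap : ∑ j, ∑ i, ‖N i j‖ ^ 2 = ∑ i, ∑ j, ‖N i j‖ ^ 2 := Finset.sum_comm
  -- step B : row identity
  have hB : ∑ i, ∑ j, ‖N i j‖ ^ 2
      = ∑ i, ∑ j, ‖M i j‖ ^ 2 - ∑ i, ‖∑ j, M i j * w j‖ ^ 2 := by
    rw [← Finset.sum_sub_distrib]
    refine Finset.sum_congr rfl fun i _ => ?_
    simpa only [hN] using rowid (fun j => M i j) w hws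
  linarith [hAsum, hswap.le, hswap.ge, hB.le, hB.ge]

private lemma cs2 (p q r s : ℝ) :
    p * q + r * s ≤ Real.sqrt (p ^ 2 + r ^ 2) * Real.sqrt (q ^ 2 + s ^ 2) := by
  rw [← Real.sqrt_mul (by positivity)]
  apply Real.le_sqrt_of_sq_le
  nlinarith [sq_nonneg (p * s - r * q)]

private lemma combine {c RA RB CA CB TA TB : ℝ} (hRA : 0 ≤ RA) (hRB : 0 ≤ RB)
    (hCA : 0 ≤ CA) (hCB : 0 ≤ CB)
    (h13 : c ≤ Real.sqrt RA * Real.sqrt CB + Real.sqrt RB * Real.sqrt CA)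
    (hA : RA + CA ≤ TA) (hB : RB + CB ≤ TB) :
    c ≤ Real.sqrt TA * Real.sqrt TB := by
  have c2 := cs2 (Real.sqrt RA) (Real.sqrt CB) (Real.sqrt CA) (Real.sqrt RB)
  rw [Real.sq_sqrt hRA, Real.sq_sqrt hCA, Real.sq_sqrt hCB, Real.sq_sqrt hRB] at c2
  have m1 : Real.sqrt (RA + CA) ≤ Real.sqrt TA := Real.sqrt_le_sqrt hA
  have m2 : Real.sqrt (CB + RB) ≤ Real.sqrt TB := Real.sqrt_le_sqrt (by linarith)
  calc c ≤ Real.sqrt RA * Real.sqrt CB + Real.sqrt RB * Real.sqrt CA := h13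
    _ ≤ Real.sqrt (RA + CA) * Real.sqrt (CB + RB) := by nlinarith [c2]
    _ ≤ Real.sqrt TA * Real.sqrt TB :=
      mul_le_mul m1 m2 (Real.sqrt_nonneg _) (Real.sqrt_nonneg _)

private lemma ccs2 (f g : Fin 3 → ℂ) :
    ‖∑ i, f i * g i‖ ≤ Real.sqrt (∑ i, ‖f i‖ ^ 2) * Real.sqrt (∑ i, ‖g i‖ ^ 2) :=
  ccs f g

private lemma key3 (A B : Matrix (Fin 3) (Fin 3) ℂ) (w : Fin 3 → ℂ)
    (hw : ∑ i, ‖w i‖ ^ 2 = 1)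
    (heig : ∑ i, ∑ j, (starRingEnd ℂ) (w i) *
        ((∑ k, (A i k * B k j - B i k * A k j)) * w j) = 1/3) :
    1/3 ≤ Real.sqrt (∑ i, ∑ j, ‖A i j‖ ^ 2) * Real.sqrt (∑ i, ∑ j, ‖B i j‖ ^ 2) := by
  have hmain : (∑ j, ((∑ i, (starRingEnd ℂ) (w i) * A i j)
          - (∑ p, ∑ q, (starRingEnd ℂ) (w p) * A p q * w q) * (starRingEnd ℂ) (w j))
        * (∑ k, B j k * w k))
      - (∑ j, ((∑ i, (starRingEnd ℂ) (w i) * B i j)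
          - (∑ p, ∑ q, (starRingEnd ℂ) (w p) * B p q * w q) * (starRingEnd ℂ) (w j))
        * (∑ k, A j k * w k)) = 1/3 := by
    simp only [Fin.sum_univ_three] at heig ⊢
    linear_combination heig
  have hn13 : (1:ℝ)/3 = ‖((1:ℂ)/3)‖ := by
    rw [norm_div, norm_one]; norm_num
  have h13 : (1:ℝ)/3 ≤
      Real.sqrt (∑ j, ‖(∑ i, (starRingEnd ℂ) (w i) * A i j)
          - (∑ p, ∑ q, (starRingEnd ℂ) (w p) * A p q * w q) * (starRingEnd ℂ) (w j)‖ ^ 2)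
        * Real.sqrt (∑ i, ‖∑ j, B i j * w j‖ ^ 2)
      + Real.sqrt (∑ j, ‖(∑ i, (starRingEnd ℂ) (w i) * B i j)
          - (∑ p, ∑ q, (starRingEnd ℂ) (w p) * B p q * w q) * (starRingEnd ℂ) (w j)‖ ^ 2)
        * Real.sqrt (∑ i, ‖∑ j, A i j * w j‖ ^ 2) := by
    rw [hn13, ← hmain]
    refine (norm_sub_le _ _).trans (add_le_add ?_ ?_)
    · exact ccs2 (fun j => (∑ i, (starRingEnd ℂ) (w i) * A i j)
          - (∑ p, ∑ q, (starRingEnd ℂ) (w p) * A p q * w q) * (starRingEnd ℂ) (w j))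
        (fun j => ∑ k, B j k * w k)
    · exact ccs2 (fun j => (∑ i, (starRingEnd ℂ) (w i) * B i j)
          - (∑ p, ∑ q, (starRingEnd ℂ) (w p) * B p q * w q) * (starRingEnd ℂ) (w j))
        (fun j => ∑ k, A j k * w k)
  refine combine ?_ ?_ ?_ ?_ h13 (matBound A w hw) (matBound B w hw) <;>
    exact Finset.sum_nonneg fun _ _ => sq_nonneg _


private lemma cs2' (p q r s : ℝ) :
    p * q + r * s ≤ Real.sqrt (p ^ 2 + r ^ 2) * Real.sqrt (q ^ 2 + s ^ 2) := by
  rw [← Real.sqrt_mul (by positivity)]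
  apply Real.le_sqrt_of_sq_le
  nlinarith [sq_nonneg (p * s - r * q)]

-- cross Cauchy-Schwarz for the off-diagonal parts
private lemma pair_cs (a b c d : Fin 3 → ℝ) :
    ∑ k, a k * d k + ∑ k, b k * c k
      ≤ Real.sqrt ((∑ k, a k ^ 2) + ∑ k, b k ^ 2)
        * Real.sqrt ((∑ k, c k ^ 2) + ∑ k, d k ^ 2) := by
  have q1 := Real.sum_mul_le_sqrt_mul_sqrt Finset.univ a d
  have q2 := Real.sum_mul_le_sqrt_mul_sqrt Finset.univ b c
  have c2 := cs2' (Real.sqrt (∑ k, a k ^ 2)) (Real.sqrt (∑ k, d k ^ 2))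
    (Real.sqrt (∑ k, b k ^ 2)) (Real.sqrt (∑ k, c k ^ 2))
  rw [Real.sq_sqrt (by positivity), Real.sq_sqrt (by positivity),
    Real.sq_sqrt (by positivity), Real.sq_sqrt (by positivity)] at c2
  have hcomm : Real.sqrt ((∑ k, d k ^ 2) + ∑ k, c k ^ 2)
      = Real.sqrt ((∑ k, c k ^ 2) + ∑ k, d k ^ 2) := by rw [add_comm]
  rw [hcomm] at c2
  linarith [c2, q1, q2]

private lemma combine2 {x y u v TA TB : ℝ} (hx : 0 ≤ x) (hy : 0 ≤ y) (hu : 0 ≤ u)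
    (hv : 0 ≤ v)
    (h1 : 1 ≤ Real.sqrt x * Real.sqrt u) (h2 : 1/3 ≤ Real.sqrt y * Real.sqrt v)
    (hA : x + y ≤ TA) (hB : u + v ≤ TB) :
    4/3 ≤ Real.sqrt TA * Real.sqrt TB := by
  have c2 := cs2' (Real.sqrt x) (Real.sqrt u) (Real.sqrt y) (Real.sqrt v)
  rw [Real.sq_sqrt hx, Real.sq_sqrt hy, Real.sq_sqrt hu, Real.sq_sqrt hv] at c2
  have m1 : Real.sqrt (x + y) ≤ Real.sqrt TA := Real.sqrt_le_sqrt hA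
  have m2 : Real.sqrt (u + v) ≤ Real.sqrt TB := Real.sqrt_le_sqrt hB
  have m3 : Real.sqrt (x + y) * Real.sqrt (u + v) ≤ Real.sqrt TA * Real.sqrt TB :=
    mul_le_mul m1 m2 (Real.sqrt_nonneg _) (Real.sqrt_nonneg _)
  linarith

/-- The Frobenius (Hilbert–Schmidt) norm of a 4×4 complex matrix. -/
noncomputable def frobeniusNorm (A : Matrix (Fin 4) (Fin 4) ℂ) : ℝ :=
  Real.sqrt (∑ i : Fin 4, ∑ j : Fin 4, ‖A i j‖ ^ 2)

theorem stmt_0 (A B : Matrix (Fin 4) (Fin 4) ℂ)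
    (h : A * B - B * A = Matrix.diagonal ![-1, 1/3, 1/3, 1/3]) :
    4/3 ≤ frobeniusNorm A * frobeniusNorm B ∧
      (frobeniusNorm A = frobeniusNorm B → Real.sqrt (4/3) ≤ frobeniusNorm A) := by
  have ss0 : Fin.succ (0 : Fin 3) = (1 : Fin 4) := by decide
  have ss1 : Fin.succ (1 : Fin 3) = (2 : Fin 4) := by decide
  have ss2 : Fin.succ (2 : Fin 3) = (3 : Fin 4) := by decide
  have hent : ∀ i j : Fin 4, (∑ k, A i k * B k j) - (∑ k, B i k * A k j)
      = Matrix.diagonal ![(-1 : ℂ), 1/3, 1/3, 1/3] i j := by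
    intro i j
    rw [← h]
    simp [Matrix.mul_apply, Matrix.sub_apply]
  have e00 := hent 0 0
  have e11 := hent 1 1
  have e12 := hent 1 2
  have e13 := hent 1 3
  have e21 := hent 2 1
  have e22 := hent 2 2
  have e23 := hent 2 3
  have e31 := hent 3 1
  have e32 := hent 3 2
  have e33 := hent 3 3
  simp only [Fin.sum_univ_four, Matrix.diagonal_apply, Fin.reduceEq, if_true, if_false,
    reduceIte, Matrix.cons_val_zero, Matrix.cons_val_one, Matrix.head_cons,
    Matrix.cons_val_two, Matrix.tail_cons, Matrix.cons_val_three]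
    at e00 e11 e12 e13 e21 e22 e23 e31 e32 e33
  -- existence of a nonzero vector orthogonal (bilinearly) to both first rows
  obtain ⟨w0, hw0ne, hw0x, hw0u⟩ :
      ∃ w0 : Fin 3 → ℂ, w0 ≠ 0 ∧ (∑ j, A 0 (Fin.succ j) * w0 j = 0)
        ∧ (∑ j, B 0 (Fin.succ j) * w0 j = 0) := by
    set M : Matrix (Fin 2) (Fin 3) ℂ :=
      Matrix.of ![fun j => A 0 (Fin.succ j), fun j => B 0 (Fin.succ j)] with hM
    have hker : LinearMap.ker M.mulVecLin ≠ ⊥ := by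
      intro hbot
      have hrk := LinearMap.finrank_range_add_finrank_ker M.mulVecLin
      rw [hbot, finrank_bot] at hrk
      have hle : Module.finrank ℂ (LinearMap.range M.mulVecLin)
          ≤ Module.finrank ℂ (Fin 2 → ℂ) := (LinearMap.range M.mulVecLin).finrank_le
      simp [Module.finrank_fin_fun] at hrk hle
      omega
    obtain ⟨w0, hmem, hne⟩ := (Submodule.ne_bot_iff _).mp hker
    have hv : M.mulVec w0 = 0 := LinearMap.mem_ker.mp hmem
    refine ⟨w0, hne, ?_, ?_⟩
    · have := congrFun hv 0
      simpa [Matrix.mulVec, dotProduct, hM] using this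
    · have := congrFun hv 1
      simpa [Matrix.mulVec, dotProduct, hM] using this
  have hpos : 0 < ∑ i, ‖w0 i‖ ^ 2 := by
    obtain ⟨i0, hi0⟩ := Function.ne_iff.mp hw0ne
    refine Finset.sum_pos' (fun i _ => sq_nonneg _) ⟨i0, Finset.mem_univ _, ?_⟩
    exact pow_pos (norm_pos_iff.mpr hi0) 2
  set nw : ℝ := Real.sqrt (∑ i, ‖w0 i‖ ^ 2) with hnw
  have hnwpos : 0 < nw := Real.sqrt_pos.mpr hpos
  set w : Fin 3 → ℂ := fun i => w0 i / (nw : ℂ) with hwdef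
  have hw : ∑ i, ‖w i‖ ^ 2 = 1 := by
    have : ∀ i, ‖w i‖ ^ 2 = ‖w0 i‖ ^ 2 / nw ^ 2 := by
      intro i
      simp [hwdef, abs_of_pos hnwpos, div_pow]
    rw [Finset.sum_congr rfl fun i _ => this i, ← Finset.sum_div,
      hnw, Real.sq_sqrt hpos.le, div_self hpos.ne']
  have hxw : ∑ j, A 0 (Fin.succ j) * w j = 0 := by
    have : ∀ j, A 0 (Fin.succ j) * w j = (A 0 (Fin.succ j) * w0 j) / (nw : ℂ) := by
      intro j; simp only [hwdef]; ring
    rw [Finset.sum_congr rfl fun j _ => this j, ← Finset.sum_div, hw0x, zero_div]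
  have huw : ∑ j, B 0 (Fin.succ j) * w j = 0 := by
    have : ∀ j, B 0 (Fin.succ j) * w j = (B 0 (Fin.succ j) * w0 j) / (nw : ℂ) := by
      intro j; simp only [hwdef]; ring
    rw [Finset.sum_congr rfl fun j _ => this j, ← Finset.sum_div, hw0u, zero_div]
  -- scalar eigen-equation for the 3x3 blocks
  have hws : ∑ j, w j * (starRingEnd ℂ) (w j) = 1 := by
    rw [sum_normsq]; exact_mod_cast congrArg Complex.ofReal hw
  have heig : ∑ i, ∑ j, (starRingEnd ℂ) (w i) *
      ((∑ k, ((Matrix.of fun p q => A (Fin.succ p) (Fin.succ q)) i k *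
              (Matrix.of fun p q => B (Fin.succ p) (Fin.succ q)) k j
            - (Matrix.of fun p q => B (Fin.succ p) (Fin.succ q)) i k *
              (Matrix.of fun p q => A (Fin.succ p) (Fin.succ q)) k j)) * w j) = 1/3 := by
    simp only [Matrix.of_apply, Fin.sum_univ_three, ss0, ss1, ss2] at hxw huw hws ⊢
    linear_combination
      (starRingEnd ℂ) (w 0) * w 0 * e11 + (starRingEnd ℂ) (w 0) * w 1 * e12
      + (starRingEnd ℂ) (w 0) * w 2 * e13
      + (starRingEnd ℂ) (w 1) * w 0 * e21 + (starRingEnd ℂ) (w 1) * w 1 * e22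
      + (starRingEnd ℂ) (w 1) * w 2 * e23
      + (starRingEnd ℂ) (w 2) * w 0 * e31 + (starRingEnd ℂ) (w 2) * w 1 * e32
      + (starRingEnd ℂ) (w 2) * w 2 * e33
      - ((starRingEnd ℂ) (w 0) * A 1 0 + (starRingEnd ℂ) (w 1) * A 2 0
          + (starRingEnd ℂ) (w 2) * A 3 0) * huw
      + ((starRingEnd ℂ) (w 0) * B 1 0 + (starRingEnd ℂ) (w 1) * B 2 0
          + (starRingEnd ℂ) (w 2) * B 3 0) * hxw
      + (1/3 : ℂ) * hws
  have h2 : 1/3 ≤ Real.sqrt (∑ i, ∑ j, ‖A (Fin.succ i) (Fin.succ j)‖ ^ 2)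
      * Real.sqrt (∑ i, ∑ j, ‖B (Fin.succ i) (Fin.succ j)‖ ^ 2) := by
    have hk := key3 (Matrix.of fun p q => A (Fin.succ p) (Fin.succ q))
      (Matrix.of fun p q => B (Fin.succ p) (Fin.succ q)) w hw heig
    simpa [Matrix.of_apply] using hk
  -- off-diagonal part
  have hS : ∑ k : Fin 3, (A 0 (Fin.succ k) * B (Fin.succ k) 0
      - B 0 (Fin.succ k) * A (Fin.succ k) 0) = -1 := by
    simp only [Fin.sum_univ_three, ss0, ss1, ss2]
    linear_combination e00
  have h1 : 1 ≤ Real.sqrt ((∑ k, ‖A 0 (Fin.succ k)‖ ^ 2) + ∑ k, ‖A (Fin.succ k) 0‖ ^ 2)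
      * Real.sqrt ((∑ k, ‖B 0 (Fin.succ k)‖ ^ 2) + ∑ k, ‖B (Fin.succ k) 0‖ ^ 2) := by
    have t1 : (1:ℝ) ≤ ∑ k : Fin 3, ‖A 0 (Fin.succ k)‖ * ‖B (Fin.succ k) 0‖
        + ∑ k : Fin 3, ‖A (Fin.succ k) 0‖ * ‖B 0 (Fin.succ k)‖ := by
      calc (1:ℝ) = ‖(-1 : ℂ)‖ := by simp
        _ = ‖∑ k : Fin 3, (A 0 (Fin.succ k) * B (Fin.succ k) 0
              - B 0 (Fin.succ k) * A (Fin.succ k) 0)‖ := by rw [hS]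
        _ ≤ ∑ k : Fin 3, ‖A 0 (Fin.succ k) * B (Fin.succ k) 0
              - B 0 (Fin.succ k) * A (Fin.succ k) 0‖ := norm_sum_le _ _
        _ ≤ ∑ k : Fin 3, (‖A 0 (Fin.succ k)‖ * ‖B (Fin.succ k) 0‖
              + ‖A (Fin.succ k) 0‖ * ‖B 0 (Fin.succ k)‖) := by
            refine Finset.sum_le_sum fun k _ => (norm_sub_le _ _).trans ?_
            exact le_of_eq (by rw [norm_mul, norm_mul]; ring)
        _ = _ := Finset.sum_add_distrib
    have t2 := pair_cs (fun k => ‖A 0 (Fin.succ k)‖) (fun k => ‖A (Fin.succ k) 0‖)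
      (fun k => ‖B 0 (Fin.succ k)‖) (fun k => ‖B (Fin.succ k) 0‖)
    exact t1.trans t2
  -- norm decompositions
  have hTA : ∑ i : Fin 4, ∑ j : Fin 4, ‖A i j‖ ^ 2
      = ‖A 0 0‖ ^ 2 + ((((∑ k : Fin 3, ‖A 0 (Fin.succ k)‖ ^ 2)
          + ∑ k : Fin 3, ‖A (Fin.succ k) 0‖ ^ 2))
        + ∑ i : Fin 3, ∑ j : Fin 3, ‖A (Fin.succ i) (Fin.succ j)‖ ^ 2) := by
    simp only [Fin.sum_univ_four, Fin.sum_univ_three, ss0, ss1, ss2]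
    ring
  have hTB : ∑ i : Fin 4, ∑ j : Fin 4, ‖B i j‖ ^ 2
      = ‖B 0 0‖ ^ 2 + ((((∑ k : Fin 3, ‖B 0 (Fin.succ k)‖ ^ 2)
          + ∑ k : Fin 3, ‖B (Fin.succ k) 0‖ ^ 2))
        + ∑ i : Fin 3, ∑ j : Fin 3, ‖B (Fin.succ i) (Fin.succ j)‖ ^ 2) := by
    simp only [Fin.sum_univ_four, Fin.sum_univ_three, ss0, ss1, ss2]
    ring
  have hmainineq : 4/3 ≤ frobeniusNorm A * frobeniusNorm B := by
    unfold frobeniusNorm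
    refine combine2 ?_ ?_ ?_ ?_ h1 h2 ?_ ?_
    · exact add_nonneg (Finset.sum_nonneg fun _ _ => sq_nonneg _)
        (Finset.sum_nonneg fun _ _ => sq_nonneg _)
    · exact Finset.sum_nonneg fun _ _ => Finset.sum_nonneg fun _ _ => sq_nonneg _
    · exact add_nonneg (Finset.sum_nonneg fun _ _ => sq_nonneg _)
        (Finset.sum_nonneg fun _ _ => sq_nonneg _)
    · exact Finset.sum_nonneg fun _ _ => Finset.sum_nonneg fun _ _ => sq_nonneg _
    · rw [hTA]; linarith [sq_nonneg (‖A 0 0‖)]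
    · rw [hTB]; linarith [sq_nonneg (‖B 0 0‖)]
  refine ⟨hmainineq, fun heq => ?_⟩
  have hnn : 0 ≤ frobeniusNorm A := Real.sqrt_nonneg _
  have hsq : 4/3 ≤ frobeniusNorm A ^ 2 := by
    rw [sq]
    calc (4:ℝ)/3 ≤ frobeniusNorm A * frobeniusNorm B := hmainineq
      _ = frobeniusNorm A * frobeniusNorm A := by rw [heq]
  calc Real.sqrt (4/3) ≤ Real.sqrt (frobeniusNorm A ^ 2) := Real.sqrt_le_sqrt hsq
    _ = frobeniusNorm A := Real.sqrt_sq hnn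
end

section
/- Let A = (1/√3)·[[0,0,0,−1],[√2,0,0,0],[0,1,0,0],[0,0,0,0]] and B = (1/√3)·[[0,√2,0,0],[0,0,1,0],[0,0,0,0],[1,0,0,0]] in M₄(ℂ). Then A·B − B·A = diag(−1, 1/3, 1/3, 1/3) and ‖A‖_F = ‖B‖_F = √(4/3). Hence the minimum of ‖A‖_F over pairs (A,B) with AB − BA = diag(−1,1/3,1/3,1/3) and ‖A‖_F = ‖B‖_F equals √(4/3). -/
noncomputable def Amat : Matrix (Fin 4) (Fin 4) ℂ :=
  (1 / (Real.sqrt 3 : ℂ)) •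
    !![0, 0, 0, -1;
       (Real.sqrt 2 : ℂ), 0, 0, 0;
       0, 1, 0, 0;
       0, 0, 0, 0]

noncomputable def Bmat : Matrix (Fin 4) (Fin 4) ℂ :=
  (1 / (Real.sqrt 3 : ℂ)) •
    !![0, (Real.sqrt 2 : ℂ), 0, 0;
       0, 0, 1, 0;
       0, 0, 0, 0;
       1, 0, 0, 0]

open scoped InnerProductSpace InnerProduct
open ContinuousLinearMap Submodule RCLike ComplexConjugate

section InnerProductSpace

variable {𝕜 E ι : Type*} [RCLike 𝕜] [NormedAddCommGroup E] [InnerProductSpace 𝕜 E] [Fintype ι]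

lemma inner_eq_inner_starProjection_add (K : Submodule 𝕜 E) [K.HasOrthogonalProjection]
    (x y : E) :
    ⟪x, y⟫_𝕜 = ⟪K.starProjection x, K.starProjection y⟫_𝕜 +
      ⟪Kᗮ.starProjection x, Kᗮ.starProjection y⟫_𝕜 := by
  have h (U : Submodule 𝕜 E) [U.HasOrthogonalProjection] :
      ⟪U.starProjection x, U.starProjection y⟫_𝕜 = ⟪x, U.starProjection y⟫_𝕜 := by
    rw [eq_comm, ← sub_eq_zero, ← inner_sub_left]
    exact starProjection_inner_eq_zero x _ (U.starProjection_apply_mem y)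
  rw [h, h, ← inner_add_right, starProjection_add_starProjection_orthogonal]

lemma inner_compress_commutator (U : Submodule 𝕜 E) [U.HasOrthogonalProjection]
    (A B : E →L[𝕜] E) {w : E} (hw : w ∈ U) (hAw : A w ∈ U) (hBw : B w ∈ U) :
    ⟪w, ((U.starProjection ∘L A ∘L U.starProjection) * (U.starProjection ∘L B ∘L U.starProjection)
      - (U.starProjection ∘L B ∘L U.starProjection) * (U.starProjection ∘L A ∘L U.starProjection))
      w⟫_𝕜 = ⟪w, (A * B - B * A) w⟫_𝕜 := by
  have h (F G : E →L[𝕜] E) (hGw : G w ∈ U) :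
      ⟪w, (U.starProjection ∘L F ∘L U.starProjection)
        ((U.starProjection ∘L G ∘L U.starProjection) w)⟫_𝕜 = ⟪w, F (G w)⟫_𝕜 := by
    simp only [comp_apply, starProjection_eq_self_iff.2 hw, starProjection_eq_self_iff.2 hGw,
      ← inner_starProjection_left_eq_right]
  simp only [sub_apply, inner_sub_right, mul_apply_eq_comp, h _ _ hAw, h _ _ hBw]

lemma exists_norm_eq_one_forall_inner_eq_zero [FiniteDimensional 𝕜 E] {k : ℕ} (v : Fin k → E)
    (hk : k < Module.finrank 𝕜 E) : ∃ w : E, ‖w‖ = 1 ∧ ∀ i, ⟪v i, w⟫_𝕜 = 0 := by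
  set S := span 𝕜 (Set.range v)
  have hS : Sᗮ ≠ ⊥ := by
    have hsum := S.finrank_add_finrank_orthogonal
    have hle : Module.finrank 𝕜 S ≤ k := by
      simpa [Set.finrank] using finrank_range_le_card (R := 𝕜) v
    rw [Ne, ← finrank_eq_zero]
    omega
  obtain ⟨u, hu, hu0⟩ := exists_mem_ne_zero_of_ne_bot hS
  refine ⟨(‖u‖⁻¹ : 𝕜) • u, norm_smul_inv_norm hu0, fun i => ?_⟩
  rw [inner_smul_right, inner_right_of_mem_orthogonal (subset_span (Set.mem_range_self i)) hu,
    mul_zero]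

noncomputable def hsNormSq (b : OrthonormalBasis ι 𝕜 E) (T : E →L[𝕜] E) : ℝ :=
  ∑ i, ‖T (b i)‖ ^ 2

section HilbertSchmidt

variable (b : OrthonormalBasis ι 𝕜 E)

lemma hsNormSq_nonneg (T : E →L[𝕜] E) : 0 ≤ hsNormSq b T := by
  unfold hsNormSq
  positivity

lemma hsNormSq_eq_add_starProjection_comp (K : Submodule 𝕜 E) [K.HasOrthogonalProjection]
    (T : E →L[𝕜] E) :
    hsNormSq b T = hsNormSq b (K.starProjection ∘L T) + hsNormSq b (Kᗮ.starProjection ∘L T) := by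
  simp only [hsNormSq, ← Finset.sum_add_distrib, comp_apply,
    ← norm_sq_eq_add_norm_sq_starProjection]

variable [CompleteSpace E]

lemma hsNormSq_adjoint (T : E →L[𝕜] E) : hsNormSq b (T†) = hsNormSq b T := by
  simp only [hsNormSq, ← b.sum_sq_norm_inner_left ((T†) (b _)), adjoint_inner_left]
  rw [Finset.sum_comm]
  simp only [b.sum_sq_norm_inner_right]

lemma hsNormSq_starProjection_singleton_comp {w : E} (hw : ‖w‖ = 1) (T : E →L[𝕜] E) :
    hsNormSq b ((𝕜 ∙ w).starProjection ∘L T) = ‖(T†) w‖ ^ 2 := by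
  simp only [hsNormSq, comp_apply, starProjection_unit_singleton 𝕜 hw, norm_smul, hw, mul_one]
  simp only [← adjoint_inner_left]
  exact b.sum_sq_norm_inner_left ((T†) w)

lemma hsNormSq_eq_add_compress {w : E} (hw : ‖w‖ = 1) (M : E →L[𝕜] E) :
    hsNormSq b M = ‖(M†) w‖ ^ 2 + ‖(𝕜 ∙ w)ᗮ.starProjection (M w)‖ ^ 2 +
      hsNormSq b ((𝕜 ∙ w)ᗮ.starProjection ∘L M ∘L (𝕜 ∙ w)ᗮ.starProjection) := by
  set Q := (𝕜 ∙ w)ᗮ.starProjection with hQdef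
  have hQ : Q† = Q := (isSelfAdjoint_starProjection _).adjoint_eq
  have hQM : Q ∘L M = ((M†) ∘L Q)† := by rw [adjoint_comp, hQ, adjoint_adjoint]
  have hQMQ : Q ∘L (M†) ∘L Q = (Q ∘L M ∘L Q)† := by
    rw [adjoint_comp, adjoint_comp, hQ, comp_assoc]
  calc hsNormSq b M
      = ‖(M†) w‖ ^ 2 + hsNormSq b ((M†) ∘L Q) := by
        rw [hsNormSq_eq_add_starProjection_comp b (𝕜 ∙ w) M,
          hsNormSq_starProjection_singleton_comp b hw, hQM, hsNormSq_adjoint]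
    _ = ‖(M†) w‖ ^ 2 + ‖Q (M w)‖ ^ 2 + hsNormSq b (Q ∘L M ∘L Q) := by
        rw [hsNormSq_eq_add_starProjection_comp b (𝕜 ∙ w),
          hsNormSq_starProjection_singleton_comp b hw, ← hQM, ← hQdef, hQMQ, hsNormSq_adjoint,
          add_assoc, comp_apply]

lemma hsNormSq_compress_add_le {w : E} (hw : ‖w‖ = 1) (M : E →L[𝕜] E) :
    hsNormSq b ((𝕜 ∙ w)ᗮ.starProjection ∘L M ∘L (𝕜 ∙ w)ᗮ.starProjection) +
      (‖(𝕜 ∙ w)ᗮ.starProjection (M w)‖ ^ 2 + ‖(𝕜 ∙ w)ᗮ.starProjection ((M†) w)‖ ^ 2) ≤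
      hsNormSq b M := by
  have hle := norm_starProjection_apply_le (𝕜 ∙ w)ᗮ ((M†) w)
  rw [hsNormSq_eq_add_compress b hw M]
  nlinarith [norm_nonneg ((𝕜 ∙ w)ᗮ.starProjection ((M†) w))]

end HilbertSchmidt

variable [CompleteSpace E]

lemma two_mul_re_inner_commutator_le {w : E} (hw : ‖w‖ = 1) (F G : E →L[𝕜] E) :
    2 * re ⟪w, (F * G - G * F) w⟫_𝕜 ≤
      ‖(𝕜 ∙ w)ᗮ.starProjection (F w)‖ ^ 2 + ‖(𝕜 ∙ w)ᗮ.starProjection ((F†) w)‖ ^ 2 +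
      ‖(𝕜 ∙ w)ᗮ.starProjection (G w)‖ ^ 2 + ‖(𝕜 ∙ w)ᗮ.starProjection ((G†) w)‖ ^ 2 := by
  set Q := (𝕜 ∙ w)ᗮ.starProjection
  have hP (x y : E) : ⟪(𝕜 ∙ w).starProjection x, (𝕜 ∙ w).starProjection y⟫_𝕜 =
      conj ⟪w, x⟫_𝕜 * ⟪w, y⟫_𝕜 := by
    simp [starProjection_unit_singleton 𝕜 hw, inner_smul_left, inner_smul_right, hw, mul_comm]
  have hFG : ⟪w, F (G w)⟫_𝕜 = ⟪(F†) w, G w⟫_𝕜 := (adjoint_inner_left F (G w) w).symm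
  have hGF : ⟪w, G (F w)⟫_𝕜 = ⟪(G†) w, F w⟫_𝕜 := (adjoint_inner_left G (F w) w).symm
  -- both `w`-components equal `⟪w, F w⟫ * ⟪w, G w⟫`
  have key : ⟪w, (F * G - G * F) w⟫_𝕜 =
      ⟪Q ((F†) w), Q (G w)⟫_𝕜 - ⟪Q ((G†) w), Q (F w)⟫_𝕜 := by
    rw [sub_apply, inner_sub_right, mul_apply_eq_comp, mul_apply_eq_comp, hFG, hGF,
      inner_eq_inner_starProjection_add (𝕜 ∙ w) ((F†) w),
      inner_eq_inner_starProjection_add (𝕜 ∙ w) ((G†) w), hP, hP, inner_conj_symm,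
      inner_conj_symm, adjoint_inner_left, adjoint_inner_left]
    ring
  have h1 := re_inner_le_norm (𝕜 := 𝕜) (Q ((F†) w)) (Q (G w))
  have h2 := re_inner_le_norm (𝕜 := 𝕜) (-Q ((G†) w)) (Q (F w))
  rw [inner_neg_left, map_neg, norm_neg] at h2
  rw [key, map_sub]
  nlinarith [two_mul_le_add_sq ‖Q ((F†) w)‖ ‖Q (G w)‖, two_mul_le_add_sq ‖Q ((G†) w)‖ ‖Q (F w)‖]

theorem two_mul_re_inner_commutator_add_le_hsNormSq (b : OrthonormalBasis ι 𝕜 E)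
    (A B : E →L[𝕜] E) {e w : E} (he : ‖e‖ = 1) (hw : ‖w‖ = 1) (hew : ⟪e, w⟫_𝕜 = 0)
    (hAw : ⟪e, A w⟫_𝕜 = 0) (hBw : ⟪e, B w⟫_𝕜 = 0) :
    2 * re ⟪e, (B * A - A * B) e⟫_𝕜 + 2 * re ⟪w, (A * B - B * A) w⟫_𝕜 ≤
      hsNormSq b A + hsNormSq b B := by
  set Q := (𝕜 ∙ e)ᗮ.starProjection
  set Q' := (𝕜 ∙ w)ᗮ.starProjection
  have houter := two_mul_re_inner_commutator_le he B A
  have hA := hsNormSq_compress_add_le b he A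
  have hB := hsNormSq_compress_add_le b he B
  rw [← inner_compress_commutator (𝕜 ∙ e)ᗮ A B (mem_orthogonal_singleton_iff_inner_right.2 hew)
    (mem_orthogonal_singleton_iff_inner_right.2 hAw)
    (mem_orthogonal_singleton_iff_inner_right.2 hBw)]
  have hinner := two_mul_re_inner_commutator_le hw (Q ∘L A ∘L Q) (Q ∘L B ∘L Q)
  have hA' := hsNormSq_compress_add_le b hw (Q ∘L A ∘L Q)
  have hB' := hsNormSq_compress_add_le b hw (Q ∘L B ∘L Q)
  have hA'' := hsNormSq_nonneg b (Q' ∘L (Q ∘L A ∘L Q) ∘L Q')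
  have hB'' := hsNormSq_nonneg b (Q' ∘L (Q ∘L B ∘L Q) ∘L Q')
  linarith

end InnerProductSpace

section Matrix

open Matrix

variable {𝕜 n : Type*} [RCLike 𝕜] [Fintype n] [DecidableEq n]

lemma hsNormSq_toEuclideanCLM (M : Matrix n n 𝕜) :
    hsNormSq (EuclideanSpace.basisFun n 𝕜) (toEuclideanCLM (n := n) (𝕜 := 𝕜) M) =
      ∑ i, ∑ j, ‖M i j‖ ^ 2 := by
  simp only [hsNormSq, EuclideanSpace.basisFun_apply, EuclideanSpace.norm_sq_eq,
    ofLp_toEuclideanCLM, PiLp.ofLp_single, mulVec_single, MulOpposite.op_one, Pi.smul_apply,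
    col_apply, one_smul]
  exact Finset.sum_comm

lemma inner_toEuclideanCLM_diagonal (d : n → 𝕜) (x : EuclideanSpace 𝕜 n) :
    ⟪x, toEuclideanCLM (n := n) (𝕜 := 𝕜) (diagonal d) x⟫_𝕜 = ∑ i, d i * ‖x i‖ ^ 2 := by
  simp only [EuclideanSpace.inner_eq_star_dotProduct, dotProduct, ofLp_toEuclideanCLM,
    mulVec_diagonal, Pi.star_apply, star_def, mul_assoc, RCLike.mul_conj]

lemma eight_thirds_le_sum_norm_sq (A B : Matrix (Fin 4) (Fin 4) ℂ)
    (hAB : A * B - B * A = diagonal ![-1, 1/3, 1/3, 1/3]) :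
    8 / 3 ≤ ∑ i, ∑ j, ‖A i j‖ ^ 2 + ∑ i, ∑ j, ‖B i j‖ ^ 2 := by
  let T := toEuclideanCLM (n := Fin 4) (𝕜 := ℂ)
  let e : EuclideanSpace ℂ (Fin 4) := EuclideanSpace.single 0 1
  obtain ⟨w, hw, hperp⟩ := exists_norm_eq_one_forall_inner_eq_zero ![e, ((T A)†) e, ((T B)†) e]
    (𝕜 := ℂ) (by simp)
  have hew : ⟪e, w⟫_ℂ = 0 := hperp 0
  have hAw : ⟪e, T A w⟫_ℂ = 0 := by rw [← adjoint_inner_left]; exact hperp 1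
  have hBw : ⟪e, T B w⟫_ℂ = 0 := by rw [← adjoint_inner_left]; exact hperp 2
  have key := two_mul_re_inner_commutator_add_le_hsNormSq (EuclideanSpace.basisFun _ ℂ)
    (T A) (T B) (by simp [e]) hw hew hAw hBw
  have hw0 : w 0 = 0 := by simpa [e, EuclideanSpace.inner_single_left] using hew
  have hDe : ⟪e, T (-diagonal ![-1, 1/3, 1/3, 1/3]) e⟫_ℂ = 1 := by
    simp [T, e, inner_toEuclideanCLM_diagonal, Fin.sum_univ_four]
  have hDw : ⟪w, T (diagonal ![-1, 1/3, 1/3, 1/3]) w⟫_ℂ = 1/3 := by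
    have hnorm := EuclideanSpace.norm_sq_eq w
    rw [hw, Fin.sum_univ_four, hw0, norm_zero] at hnorm
    have hnormC := congrArg ((↑) : ℝ → ℂ) hnorm
    push_cast at hnormC
    simp only [T, inner_toEuclideanCLM_diagonal, Fin.sum_univ_four, hw0, norm_zero,
      Complex.ofReal_zero, cons_val_zero, cons_val_one, cons_val, Complex.coe_algebraMap]
    linear_combination (-1/3 : ℂ) * hnormC
  simp only [← map_mul, ← map_sub] at key
  rw [hsNormSq_toEuclideanCLM, hsNormSq_toEuclideanCLM, ← neg_sub, hAB, hDe, hDw] at key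
  norm_num at key
  linarith

end Matrix

lemma commutator_Amat_Bmat :
    Amat * Bmat - Bmat * Amat = Matrix.diagonal ![-1, 1/3, 1/3, 1/3] := by
  ext i j
  fin_cases i <;> fin_cases j <;> simp [Amat, Bmat, Matrix.diagonal] <;> field_simp <;>
    norm_num [← Complex.ofReal_pow]

lemma frobeniusNorm_Amat : frobeniusNorm Amat = √(4/3) := by
  simp [frobeniusNorm, Amat, Fin.sum_univ_four]
  field_simp
  norm_num

lemma frobeniusNorm_Bmat : frobeniusNorm Bmat = √(4/3) := by
  simp [frobeniusNorm, Bmat, Fin.sum_univ_four]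
  field_simp
  norm_num

theorem stmt_1 :
    Amat * Bmat - Bmat * Amat = Matrix.diagonal ![-1, 1/3, 1/3, 1/3] ∧
    frobeniusNorm Amat = Real.sqrt (4/3) ∧
    frobeniusNorm Bmat = Real.sqrt (4/3) ∧
    IsLeast {x : ℝ | ∃ A B : Matrix (Fin 4) (Fin 4) ℂ,
        A * B - B * A = Matrix.diagonal ![-1, 1/3, 1/3, 1/3] ∧
        frobeniusNorm A = frobeniusNorm B ∧ x = frobeniusNorm A}
      (Real.sqrt (4/3)) := by
  refine ⟨commutator_Amat_Bmat, frobeniusNorm_Amat, frobeniusNorm_Bmat,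
    ⟨Amat, Bmat, commutator_Amat_Bmat, frobeniusNorm_Amat.trans frobeniusNorm_Bmat.symm,
      frobeniusNorm_Amat.symm⟩, ?_⟩
  rintro x ⟨A, B, hAB, hnorm, rfl⟩
  have hsum := eight_thirds_le_sum_norm_sq A B hAB
  unfold frobeniusNorm at hnorm ⊢
  have hsq := (Real.sqrt_inj (by positivity) (by positivity)).1 hnorm
  exact Real.sqrt_le_sqrt (by linarith)
end

section
/- Let H be a separable infinite-dimensional complex Hilbert space with orthonormal basis (e_n)_{n≥1}, and let A₁, …, A_N be bounded linear operators on H. Then there exists a unitary operator U on H with U e₁ = e₁ such that for every k ∈ {1,…,N} and every n ≥ 1, the matrix of U*A_kU with respect to (e_n) has its n-th row and n-th column supported in the first n(2N+1) entries; that is, ⟨e_n, U*A_kU e_m⟩ = 0 and ⟨e_m, U*A_kU e_n⟩ = 0 whenever m > n(2N+1). -/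
/-!
Since `H` is infinite-dimensional, any vector can be absorbed into the span of a finite
orthonormal family by adjoining one more unit vector orthogonal to it. Starting from
`f 0 = e 1`, build an orthonormal sequence greedily, giving the vector `f j` a block of `2N + 1`
consecutive steps in which `A k (f j)`, `(A k)* (f j)` and finally `e (j + 1)` are absorbed.
Then `A k (f j)` and `(A k)* (f j)` lie in the span of the first `(j + 1)(2N + 1)` vectors, every
`e n` lies in the span of the `f j`, so `(f j)` is a Hilbert basis, and the unitary sending
`e n` to `f (n - 1)` conjugates each `A k` into a matrix with the required band structure.
-/

open Submodule Set

section Greedy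

variable {𝕜 E : Type*} [RCLike 𝕜] [NormedAddCommGroup E] [InnerProductSpace 𝕜 E]

theorem exists_norm_eq_one_mem_orthogonal_mem_sup_span (hE : ¬FiniteDimensional 𝕜 E)
    {s : Set E} (hs : s.Finite) (v : E) :
    ∃ w : E, ‖w‖ = 1 ∧ w ∈ (span 𝕜 s)ᗮ ∧ v ∈ span 𝕜 s ⊔ 𝕜 ∙ w := by
  set V := span 𝕜 s
  have : FiniteDimensional 𝕜 V := FiniteDimensional.span_of_finite 𝕜 hs
  suffices ∃ u ∈ Vᗮ, u ≠ 0 ∧ v ∈ V ⊔ 𝕜 ∙ u by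
    obtain ⟨u, huV, hu0, hvu⟩ := this
    refine ⟨(‖u‖⁻¹ : 𝕜) • u, norm_smul_inv_norm hu0, Vᗮ.smul_mem _ huV, ?_⟩
    rwa [span_singleton_smul_eq (by simpa using hu0)]
  by_cases hv : v ∈ V
  · have hV : Vᗮ ≠ ⊥ := fun h ↦ hE <| by
      rw [orthogonal_eq_bot_iff] at h
      rw [h] at this
      exact topEquiv.finiteDimensional
    obtain ⟨u, huV, hu0⟩ := exists_mem_ne_zero_of_ne_bot hV
    exact ⟨u, huV, hu0, mem_sup_left hv⟩
  · refine ⟨v - V.starProjection v, V.sub_starProjection_mem_orthogonal v,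
      sub_ne_zero.2 fun h ↦ hv (h ▸ V.starProjection_apply_mem v), ?_⟩
    simpa using add_mem_sup (V.starProjection_apply_mem v)
      (mem_span_singleton_self (v - V.starProjection v))

theorem Orthonormal.inner_eq_zero_of_mem_span_image {ι : Type*} {v : ι → E}
    (hv : Orthonormal 𝕜 v) {s : Set ι} {i : ι} (hi : i ∉ s) {x : E} (hx : x ∈ span 𝕜 (v '' s)) :
    inner 𝕜 (v i) x = 0 := by
  suffices span 𝕜 (v '' s) ≤ (𝕜 ∙ v i)ᗮ from mem_orthogonal_singleton_iff_inner_right.1 (this hx)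
  rw [span_le]
  rintro _ ⟨j, hj, rfl⟩
  exact mem_orthogonal_singleton_iff_inner_right.2 (hv.2 (ne_of_mem_of_not_mem hj hi).symm)

noncomputable def greedyOrthonormalSeq (hE : ¬FiniteDimensional 𝕜 E) (x₀ : E) (src : ℕ → ℕ)
    (hsrc : ∀ t, src t ≤ t) (φ : ℕ → E → E) : ℕ → E
  | 0 => x₀
  | t + 1 =>
    Classical.choose <| exists_norm_eq_one_mem_orthogonal_mem_sup_span hE
      (finite_range fun s : Fin (t + 1) ↦ greedyOrthonormalSeq hE x₀ src hsrc φ s)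
      (φ t (greedyOrthonormalSeq hE x₀ src hsrc φ (src t)))
  decreasing_by all_goals grind

section GreedyOrthonormalSeq

variable (hE : ¬FiniteDimensional 𝕜 E) (x₀ : E) (src : ℕ → ℕ) (hsrc : ∀ t, src t ≤ t)
  (φ : ℕ → E → E)

local notation "f" => greedyOrthonormalSeq hE x₀ src hsrc φ

theorem greedyOrthonormalSeq_zero : f 0 = x₀ := by
  rw [greedyOrthonormalSeq]

theorem greedyOrthonormalSeq_succ_spec (t : ℕ) :
    ‖f (t + 1)‖ = 1 ∧ f (t + 1) ∈ (span 𝕜 (f '' Iio (t + 1)))ᗮ ∧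
      φ t (f (src t)) ∈ span 𝕜 (f '' Iio (t + 1)) ⊔ 𝕜 ∙ f (t + 1) := by
  rw [← Fin.range_val, ← range_comp, greedyOrthonormalSeq]
  exact Classical.choose_spec (exists_norm_eq_one_mem_orthogonal_mem_sup_span hE (finite_range _) _)

theorem orthonormal_greedyOrthonormalSeq (hx₀ : ‖x₀‖ = 1) : Orthonormal 𝕜 f := by
  have norm_eq : ∀ t, ‖f t‖ = 1
    | 0 => by rwa [greedyOrthonormalSeq_zero]
    | t + 1 => (greedyOrthonormalSeq_succ_spec hE x₀ src hsrc φ t).1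
  have inner_eq_zero {s t : ℕ} (hst : s < t) : inner 𝕜 (f s) (f t) = 0 := by
    obtain ⟨t, rfl⟩ := Nat.exists_eq_succ_of_ne_zero (Nat.ne_zero_of_lt hst)
    exact inner_right_of_mem_orthogonal (subset_span (mem_image_of_mem f hst))
      (greedyOrthonormalSeq_succ_spec hE x₀ src hsrc φ t).2.1
  refine ⟨norm_eq, fun s t hst ↦ ?_⟩
  rcases hst.lt_or_gt with hst | hst
  · exact inner_eq_zero hst
  · exact inner_eq_zero_symm.1 (inner_eq_zero hst)

theorem greedyOrthonormalSeq_absorbs (t : ℕ) : φ t (f (src t)) ∈ span 𝕜 (f '' Iio (t + 2)) := by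
  have hnew : 𝕜 ∙ f (t + 1) ≤ span 𝕜 (f '' Iio (t + 2)) :=
    (span_singleton_le_iff_mem _ _).2 (subset_span (mem_image_of_mem f (by simp)))
  exact sup_le (span_mono (image_mono (Iio_subset_Iio (by omega)))) hnew
    (greedyOrthonormalSeq_succ_spec hE x₀ src hsrc φ t).2.2

end GreedyOrthonormalSeq

theorem exists_orthonormal_absorbing_blocks (hE : ¬FiniteDimensional 𝕜 E) {x₀ : E}
    (hx₀ : ‖x₀‖ = 1) {K : ℕ} (T : ℕ → Fin (K + 1) → E → E) :
    ∃ f : ℕ → E, Orthonormal 𝕜 f ∧ f 0 = x₀ ∧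
      ∀ j (c : Fin (K + 1)), T j c (f j) ∈ span 𝕜 (f '' Iio (j * (K + 1) + c + 2)) := by
  let src (t : ℕ) : ℕ := t / (K + 1)
  have hsrc (t : ℕ) : src t ≤ t := Nat.div_le_self t _
  let φ (t : ℕ) : E → E := T (t / (K + 1)) (Fin.ofNat _ t)
  refine ⟨_, orthonormal_greedyOrthonormalSeq hE x₀ src hsrc φ hx₀,
    greedyOrthonormalSeq_zero .., fun j c ↦ ?_⟩
  have hdiv : (j * (K + 1) + c) / (K + 1) = j :=
    Nat.div_eq_of_lt_le (by omega) (by rw [add_one_mul]; omega)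
  have hmod : Fin.ofNat (K + 1) (j * (K + 1) + c) = c :=
    Fin.ext (Nat.mul_add_mod_of_lt c.isLt)
  simpa only [φ, src, hdiv, hmod] using
    greedyOrthonormalSeq_absorbs hE x₀ src hsrc φ (j * (K + 1) + c)

end Greedy

section HilbertBasis

variable {ι ι' 𝕜 E : Type*} [RCLike 𝕜] [NormedAddCommGroup E] [InnerProductSpace 𝕜 E]

theorem HilbertBasis.top_le_topologicalClosure_span (b : HilbertBasis ι 𝕜 E) {v : ι' → E}
    (h : ∀ i, b i ∈ span 𝕜 (range v)) : ⊤ ≤ (span 𝕜 (range v)).topologicalClosure :=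
  b.dense_span.ge.trans (topologicalClosure_mono (span_le.2 (range_subset_iff.2 h)))

variable [CompleteSpace E]

theorem HilbertBasis.exists_unitary_apply_eq (b b' : HilbertBasis ι 𝕜 E) :
    ∃ U ∈ unitary (E →L[𝕜] E), ∀ i, U (b i) = b' i :=
  ⟨_, (Unitary.linearIsometryEquiv.symm (b.repr.trans b'.repr.symm)).2, fun i ↦ by
    classical
    simp [b.repr_self, b'.repr_symm_single]⟩

end HilbertBasis

open ContinuousLinearMap

theorem exists_orthonormal_band {𝕜 E : Type*} [RCLike 𝕜] [NormedAddCommGroup E]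
    [InnerProductSpace 𝕜 E] [CompleteSpace E] (e : HilbertBasis ℕ+ 𝕜 E) {N : ℕ}
    (A : Fin N → E →L[𝕜] E) :
    ∃ f : ℕ → E, Orthonormal 𝕜 f ∧ f 0 = e 1 ∧ (∀ n, e n ∈ span 𝕜 (range f)) ∧
      ∀ k j, A k (f j) ∈ span 𝕜 (f '' Iio ((j + 1) * (2 * N + 1))) ∧
        adjoint (A k) (f j) ∈ span 𝕜 (f '' Iio ((j + 1) * (2 * N + 1))) := by
  have hE : ¬FiniteDimensional 𝕜 E := fun _ ↦
    Module.Finite.not_linearIndependent_of_infinite _ e.orthonormal.linearIndependent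
  obtain ⟨f, hf, hf0, hT⟩ := exists_orthonormal_absorbing_blocks hE (e.orthonormal.1 1) (K := N + N)
    fun j ↦ Fin.lastCases (fun _ ↦ e j.succPNat) (Fin.addCases (fun k ↦ A k) fun k ↦ adjoint (A k))
  -- only the last slot of each block, used for `e (j + 1)`, overshoots the band
  have hslot (j : ℕ) (c : Fin (N + N)) :
      Fin.addCases (fun k ↦ A k) (fun k ↦ adjoint (A k)) c (f j) ∈
        span 𝕜 (f '' Iio ((j + 1) * (2 * N + 1))) := by
    have := hT j c.castSucc
    rw [Fin.lastCases_castSucc, Fin.val_castSucc] at this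
    refine span_mono (image_mono (Iio_subset_Iio ?_)) this
    rw [two_mul, add_one_mul]
    omega
  refine ⟨f, hf, hf0, fun n ↦ ?_, fun k j ↦ ⟨?_, ?_⟩⟩
  · have := hT n.natPred (Fin.last _)
    rw [Fin.lastCases_last, PNat.succPNat_natPred] at this
    exact span_mono (image_subset_range _ _) this
  · simpa only [Fin.addCases_left] using hslot j (Fin.castAdd N k)
  · simpa only [Fin.addCases_right] using hslot j (Fin.natAdd N k)

theorem stmt_2 {H : Type*} [NormedAddCommGroup H] [InnerProductSpace ℂ H] [CompleteSpace H]
    (e : HilbertBasis ℕ+ ℂ H) (N : ℕ) (A : Fin N → H →L[ℂ] H) :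
    ∃ U : H →L[ℂ] H, U ∈ unitary (H →L[ℂ] H) ∧ U (e 1) = e 1 ∧
      ∀ k : Fin N, ∀ n m : ℕ+, (n : ℕ) * (2 * N + 1) < (m : ℕ) →
        inner ℂ (e n) ((adjoint U ∘L A k ∘L U) (e m)) = (0 : ℂ) ∧
        inner ℂ (e m) ((adjoint U ∘L A k ∘L U) (e n)) = (0 : ℂ) := by
  obtain ⟨f, hf, hf0, he, hband⟩ := exists_orthonormal_band e A
  have hF : Orthonormal ℂ (f ∘ Equiv.pnatEquivNat) := hf.comp _ Equiv.pnatEquivNat.injective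
  obtain ⟨U, hU, hUe⟩ := e.exists_unitary_apply_eq <| HilbertBasis.mk hF <|
    e.top_le_topologicalClosure_span (by rwa [EquivLike.range_comp])
  replace hUe (n : ℕ+) : U (e n) = f n.natPred := by simp [hUe]
  have entry (k : Fin N) (n m : ℕ+) : inner ℂ (e n) ((adjoint U ∘L A k ∘L U) (e m)) =
      inner ℂ (f n.natPred) (A k (f m.natPred)) := by
    simp [adjoint_inner_right, hUe]
  refine ⟨U, hU, (hUe 1).trans hf0, fun k n m hnm ↦ ?_⟩
  have hm : m.natPred ∉ Iio ((n.natPred + 1) * (2 * N + 1)) := by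
    rw [PNat.natPred_add_one, notMem_Iio]
    have := m.natPred_add_one
    omega
  constructor
  · rw [entry, ← adjoint_inner_left]
    exact inner_eq_zero_symm.1 (hf.inner_eq_zero_of_mem_span_image hm (hband k _).2)
  · rw [entry]
    exact hf.inner_eq_zero_of_mem_span_image hm (hband k _).1
end

section
/- Let r ≥ 0 and let T ∈ M_{r+1}(ℂ) be a Hermitian matrix (T = T*) with trace zero. Then there exists Y ∈ M_{r+1}(ℂ) such that T = Y*·Y − Y·Y*, i.e., T is a self-commutator [Y*, Y]. -/
/-!
Diagonalise `T` unitarily with its eigenvalues in decreasing order `d₀ ≥ d₁ ≥ ⋯ ≥ d_{m-1}`.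
Since they sum to zero, the partial sums `t k = d₀ + ⋯ + d_{k-1}` are nonnegative, with
`t 0 = t m = 0`. The weighted shift `Y eⱼ = √(t (j+1)) e_{j+1}` then has
`Y*Y = diag (t (i+1))` and `YY* = diag (t i)`, so `Y*Y - YY* = diag d`, and conjugating `Y` back
by the unitary gives `T`.
-/

open Matrix Finset

def IsSelfCommutator {R : Type*} [Mul R] [Sub R] [Star R] (a : R) : Prop :=
  ∃ y, a = star y * y - y * star y

theorem IsSelfCommutator.map {R S F : Type*} [NonUnitalNonAssocRing R] [Star R]
    [NonUnitalNonAssocRing S] [Star S] [FunLike F R S] [NonUnitalRingHomClass F R S]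
    [StarHomClass F R S] {a : R} (h : IsSelfCommutator a) (φ : F) : IsSelfCommutator (φ a) := by
  obtain ⟨y, rfl⟩ := h
  exact ⟨φ y, by rw [map_sub, map_mul, map_mul, map_star]⟩

theorem IsSelfCommutator.submatrix {m n R : Type*} [Fintype m] [Fintype n] [Ring R]
    [StarRing R] {A : Matrix m m R} (h : IsSelfCommutator A) (e : n ≃ m) :
    IsSelfCommutator (A.submatrix e e) := by
  obtain ⟨Y, rfl⟩ := h
  refine ⟨Y.submatrix e e, ?_⟩
  simp [star_eq_conjTranspose, conjTranspose_submatrix, submatrix_sub, submatrix_mul_equiv]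

theorem Fin.sum_ite_val_eq {M : Type*} [AddCommMonoid M] (m a : ℕ) (x : M) :
    ∑ k : Fin m, (if (k : ℕ) = a then x else 0) = if a < m then x else 0 := by
  rw [Fin.sum_univ_eq_sum_range (fun k => if k = a then x else 0), sum_ite_eq']
  simp only [mem_range]

def weightedShift {R : Type*} [Zero R] (m : ℕ) (c : ℕ → R) : Matrix (Fin m) (Fin m) R :=
  of fun i j => if (i : ℕ) = j + 1 then c i else 0

section weightedShift

variable {R : Type*} [Semiring R] [StarRing R] {m : ℕ} (c : ℕ → R)

theorem conjTranspose_weightedShift_mul_self (hc : c m = 0) :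
    (weightedShift m c)ᴴ * weightedShift m c =
      diagonal fun i : Fin m => star (c (i + 1)) * c (i + 1) := by
  ext i j
  simp only [mul_apply, conjTranspose_apply, weightedShift, of_apply]
  obtain rfl | hij := eq_or_ne i j
  · have hsummand : ∀ k : Fin m, star (if (k : ℕ) = i + 1 then c k else 0) *
        (if (k : ℕ) = i + 1 then c k else 0) =
        if (k : ℕ) = i + 1 then star (c (i + 1)) * c (i + 1) else 0 := by
      intro k
      split_ifs with hk
      · rw [hk]
      · simp
    rw [sum_congr rfl fun k _ => hsummand k, Fin.sum_ite_val_eq, diagonal_apply_eq]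
    split_ifs with hlt
    · rfl
    · rw [show (i : ℕ) + 1 = m by omega, hc, mul_zero]
  · rw [diagonal_apply_ne _ hij]
    refine sum_eq_zero fun k _ => ?_
    split_ifs with hi hj <;> first | exact absurd (Fin.ext (by omega)) hij | simp

theorem weightedShift_mul_conjTranspose_self (hc : c 0 = 0) :
    weightedShift m c * (weightedShift m c)ᴴ = diagonal fun i : Fin m => c i * star (c i) := by
  ext i j
  simp only [mul_apply, conjTranspose_apply, weightedShift, of_apply]
  obtain rfl | hij := eq_or_ne i j
  · -- at `i = 0` the truncated `i - 1 = 0` picks the term `k = 0`, which vanishes as `c 0 = 0`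
    have hsummand : ∀ k : Fin m, (if (i : ℕ) = k + 1 then c i else 0) *
        star (if (i : ℕ) = k + 1 then c i else 0) =
        if (k : ℕ) = i - 1 then c i * star (c i) else 0 := by
      intro k
      split_ifs with hi hk hk
      · rfl
      · omega
      · simp [show (i : ℕ) = 0 by omega, hc]
      · simp
    rw [sum_congr rfl fun k _ => hsummand k, Fin.sum_ite_val_eq, if_pos (by omega),
      diagonal_apply_eq]
  · rw [diagonal_apply_ne _ hij]
    refine sum_eq_zero fun k _ => ?_
    split_ifs with hi hj <;> first | exact absurd (Fin.ext (by omega)) hij | simp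

end weightedShift

theorem sum_range_nonneg_of_antitoneOn {d : ℕ → ℝ} {m k : ℕ} (hd : AntitoneOn d (Set.Iio m))
    (hsum : ∑ i ∈ range m, d i = 0) (hk : k ≤ m) : 0 ≤ ∑ i ∈ range k, d i := by
  by_cases hneg : ∃ i < k, d i < 0
  · obtain ⟨i, hik, hi⟩ := hneg
    have htail : ∑ j ∈ Ico k m, d j ≤ 0 := sum_nonpos fun j hj => by
      have hj := mem_Ico.mp hj
      exact (hd (by simp; omega) (by simpa using hj.2) (by omega)).trans hi.le
    linarith [sum_range_add_sum_Ico d hk]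
  · push Not at hneg
    exact sum_nonneg fun i hi => hneg i (mem_range.mp hi)

theorem isSelfCommutator_diagonal_of_antitone {𝕜 : Type*} [RCLike 𝕜] {m : ℕ} {d : Fin m → ℝ}
    (hd : Antitone d) (hsum : ∑ i, d i = 0) : IsSelfCommutator (diagonal fun i => (d i : 𝕜)) := by
  set e : ℕ → ℝ := fun k => if h : k < m then d ⟨k, h⟩ else 0
  have he : ∀ i : Fin m, e i = d i := fun i => dif_pos i.2
  have he_anti : AntitoneOn e (Set.Iio m) := fun a ha b hb hab => by
    simp only [e, dif_pos (Set.mem_Iio.mp ha), dif_pos (Set.mem_Iio.mp hb)]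
    exact hd (Fin.mk_le_mk.mpr hab)
  have he_sum : ∑ i ∈ range m, e i = 0 := by
    rw [← Fin.sum_univ_eq_sum_range, ← hsum]
    exact sum_congr rfl fun i _ => he i
  set t : ℕ → ℝ := fun k => ∑ i ∈ range k, e i
  set c : ℕ → 𝕜 := fun k => ((√(t k) : ℝ) : 𝕜)
  have hc : ∀ k ≤ m, star (c k) * c k = t k := fun k hk => by
    rw [RCLike.star_def, RCLike.conj_ofReal, ← RCLike.ofReal_mul,
      Real.mul_self_sqrt (sum_range_nonneg_of_antitoneOn he_anti he_sum hk)]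
  refine ⟨weightedShift m c, ?_⟩
  rw [star_eq_conjTranspose, conjTranspose_weightedShift_mul_self c (by simp [c, t, he_sum]),
    weightedShift_mul_conjTranspose_self c (by simp [c, t]), diagonal_sub]
  congr 1
  ext i
  rw [hc _ i.2, mul_comm, hc _ i.2.le, ← he]
  simp only [t, sum_range_succ]
  push_cast
  ring

theorem Matrix.IsHermitian.isSelfCommutator_of_trace_eq_zero {𝕜 n : Type*} [RCLike 𝕜]
    [Fintype n] [DecidableEq n] {A : Matrix n n 𝕜} (hA : A.IsHermitian) (htr : A.trace = 0) :
    IsSelfCommutator A := by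
  set e := Fintype.equivOfCardEq (Fintype.card_fin (Fintype.card n))
  have hsum : ∑ i, hA.eigenvalues₀ i = 0 := by
    have h := hA.trace_eq_sum_eigenvalues
    rw [htr, ← RCLike.ofReal_sum, eq_comm, RCLike.ofReal_eq_zero] at h
    exact (e.symm.sum_comp hA.eigenvalues₀).symm.trans h
  have hdiag : IsSelfCommutator (diagonal (RCLike.ofReal ∘ hA.eigenvalues) : Matrix n n 𝕜) := by
    have h := (isSelfCommutator_diagonal_of_antitone (𝕜 := 𝕜) hA.eigenvalues₀_antitone
      hsum).submatrix e.symm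
    rwa [submatrix_diagonal_equiv] at h
  rw [hA.spectral_theorem]
  exact hdiag.map _

theorem stmt_5 (r : ℕ) (T : Matrix (Fin (r + 1)) (Fin (r + 1)) ℂ)
    (hT : T.IsHermitian) (htr : T.trace = 0) :
    ∃ Y : Matrix (Fin (r + 1)) (Fin (r + 1)) ℂ, T = Yᴴ * Y - Y * Yᴴ :=
  hT.isSelfCommutator_of_trace_eq_zero htr
end

section
/- Let H be a complex Hilbert space and J̃ : H → H an anti-conjugation, i.e., a conjugate-linear isometric bijection with J̃∘J̃ = −id. Let T be a compact self-adjoint bounded operator on H satisfying T(J̃v) = −J̃(Tv) for all v ∈ H. If the kernel of T is finite-dimensional, then its complex dimension is an even natural number. -/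
/-!
A conjugate-linear `J` with `J ∘ J = -1` makes a complex vector space quaternionic: for `v ≠ 0`
the vectors `v` and `J v` are independent (if `J v = c • v` then `-v = J (J v) = ‖c‖² • v`), so
they span a `J`-invariant plane, and `J` descends to the quotient by it. Induction on the
dimension shows that every such space has even dimension. The kernel of an operator
anticommuting with `J` is `J`-invariant.
-/

open Module

namespace LinearMap

variable {V : Type*} [AddCommGroup V] [Module ℂ V] (J : V →ₛₗ[starRingEnd ℂ] V)

theorem smul_ne_apply_of_sq_eq_neg (hJ : ∀ v, J (J v) = -v) {v : V} (hv : v ≠ 0) (c : ℂ) :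
    c • v ≠ J v := by
  intro hc
  have h := hJ v
  rw [← hc, map_smulₛₗ, ← hc, smul_smul, Complex.conj_mul'] at h
  have : ((‖c‖ : ℂ) ^ 2 + 1) • v = 0 := by rw [add_smul, one_smul, h, neg_add_cancel]
  exact hv ((smul_eq_zero.mp this).resolve_left (by norm_cast; positivity))

theorem finrank_span_pair_apply_eq_two (hJ : ∀ v, J (J v) = -v) {v : V} (hv : v ≠ 0) :
    finrank ℂ (Submodule.span ℂ (Set.range ![v, J v])) = 2 :=
  finrank_span_eq_card <| (LinearIndependent.pair_iff' hv).mpr <|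
    smul_ne_apply_of_sq_eq_neg J hJ hv

theorem span_pair_apply_le_comap (hJ : ∀ v, J (J v) = -v) (v : V) :
    Submodule.span ℂ (Set.range ![v, J v]) ≤ (Submodule.span ℂ (Set.range ![v, J v])).comap J := by
  rw [Submodule.span_le, Set.range_subset_iff, Fin.forall_fin_two]
  refine ⟨Submodule.subset_span ⟨1, rfl⟩, ?_⟩
  show J (J v) ∈ Submodule.span ℂ (Set.range ![v, J v])
  rw [hJ]
  exact Submodule.neg_mem _ (Submodule.subset_span ⟨0, rfl⟩)

theorem mapQ_mapQ_of_sq_eq_neg (hJ : ∀ v, J (J v) = -v) {W : Submodule ℂ V}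
    (hW : W ≤ W.comap J) (x : V ⧸ W) : W.mapQ W J hW (W.mapQ W J hW x) = -x := by
  induction x using Submodule.Quotient.induction_on with
  | _ x => simp [hJ]

theorem even_finrank_of_sq_eq_neg (hJ : ∀ v, J (J v) = -v) : Even (finrank ℂ V) := by
  by_cases hfin : FiniteDimensional ℂ V
  swap
  · exact finrank_of_not_finite hfin ▸ Even.zero
  generalize hn : finrank ℂ V = n
  induction n using Nat.strong_induction_on generalizing V with
  | _ n ih =>
    obtain rfl | hpos := n.eq_zero_or_pos
    · exact Even.zero
    obtain ⟨v, hv⟩ := finrank_pos_iff_exists_ne_zero.mp (hn ▸ hpos)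
    set W := Submodule.span ℂ (Set.range ![v, J v])
    have hW := span_pair_apply_le_comap J hJ v
    have hdim : finrank ℂ (V ⧸ W) + 2 = n := by
      rw [← finrank_span_pair_apply_eq_two J hJ hv, ← hn]
      exact W.finrank_quotient_add_finrank
    have hquot : Even (finrank ℂ (V ⧸ W)) :=
      ih _ (by omega) (W.mapQ W J hW) (mapQ_mapQ_of_sq_eq_neg J hJ hW) inferInstance rfl
    exact hdim ▸ hquot.add even_two

end LinearMap

theorem stmt_9_general {H : Type*} [NormedAddCommGroup H] [InnerProductSpace ℂ H]
    (J : H → H)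
    (hadd : ∀ v w, J (v + w) = J v + J w)
    (hsmul : ∀ (c : ℂ) (v : H), J (c • v) = (starRingEnd ℂ) c • J v)
    (hJJ : ∀ v, J (J v) = -v)
    (T : H →L[ℂ] H)
    (hTJ : ∀ v, T (J v) = -J (T v)) :
    Even (Module.finrank ℂ (LinearMap.ker (T : H →ₗ[ℂ] H))) := by
  let Jₛₗ : H →ₛₗ[starRingEnd ℂ] H := ⟨⟨J, hadd⟩, hsmul⟩
  have hker : ∀ v ∈ LinearMap.ker (T : H →ₗ[ℂ] H), J v ∈ LinearMap.ker (T : H →ₗ[ℂ] H) := by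
    intro v hv
    simp only [LinearMap.mem_ker, ContinuousLinearMap.coe_coe] at hv ⊢
    rw [hTJ, hv, show J 0 = 0 from map_zero Jₛₗ, neg_zero]
  exact LinearMap.even_finrank_of_sq_eq_neg (Jₛₗ.restrict hker) fun v => Subtype.ext (hJJ v)

theorem stmt_9 {H : Type*} [NormedAddCommGroup H] [InnerProductSpace ℂ H] [CompleteSpace H]
    (J : H → H)
    (hadd : ∀ v w, J (v + w) = J v + J w)
    (hsmul : ∀ (c : ℂ) (v : H), J (c • v) = (starRingEnd ℂ) c • J v)
    (hnorm : ∀ v, ‖J v‖ = ‖v‖)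
    (hbij : Function.Bijective J)
    (hJJ : ∀ v, J (J v) = -v)
    (T : H →L[ℂ] H) (hcpt : IsCompactOperator ⇑T) (hsa : IsSelfAdjoint T)
    (hTJ : ∀ v, T (J v) = -J (T v))
    (hfin : FiniteDimensional ℂ (LinearMap.ker (T : H →ₗ[ℂ] H))) :
    Even (Module.finrank ℂ (LinearMap.ker (T : H →ₗ[ℂ] H))) :=
  stmt_9_general J hadd hsmul hJJ T hTJ
end

section
/- Let H be a separable infinite-dimensional complex Hilbert space and J̃ : H → H an anti-conjugation, i.e., a conjugate-linear isometric bijection with J̃∘J̃ = −id. Let T be any compact operator on H satisfying T = −J̃ T* J̃⁻¹ (i.e., T ∈ sp_∞(H)). Then there exist compact operators X and Y on H, both satisfying the same condition X = −J̃X*J̃⁻¹ and Y = −J̃Y*J̃⁻¹, such that T = (X*∘X − X∘X*) + i·(Y*∘Y − Y∘Y*). -/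
/-!
Split `T = A + i B` into its real and imaginary parts; both are compact, self-adjoint and again
satisfy `S = -J S* J⁻¹`, which for self-adjoint `S` says `J S J⁻¹ = -S`. So it suffices to write
such an `A` as `X*X - XX*` with `X` compact in `sp`. Diagonalise `A` in a Hilbert basis of
eigenvectors (the spectral theorem for compact self-adjoint operators) and let `C` be complex
conjugation of coordinates in that basis: an antiunitary involution commuting with `A`, hence
with every real function of `A`. With `A₊, A₋` the positive and negative parts of `A`, take
`X = J C √A₊`. Then `X*X = A₊` and `XX* = J A₊ J⁻¹ = A₋`, so `X*X - XX* = A`; `X ∈ sp` because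
`C` commutes with `√A₊`; and `X` is compact because `X*X = A₊` is, which holds because
`A₊² = A A₊` is compact.
-/

open ContinuousLinearMap
open scoped ComplexStarModule

namespace LinearIsometry

variable {E F : Type*} [NormedAddCommGroup E] [InnerProductSpace ℂ E]
  [NormedAddCommGroup F] [InnerProductSpace ℂ F]

open Complex in
theorem inner_map_map_conj (f : E →ₗᵢ⋆[ℂ] F) (x y : E) :
    inner ℂ (f x) (f y) = inner ℂ y x := by
  have hrot (u v : E) : ‖u + I • v‖ = ‖v - I • u‖ := by
    rw [← one_mul ‖u + I • v‖, ← norm_I, ← norm_smul, norm_sub_rev]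
    simp [smul_add, smul_smul, sub_eq_add_neg]
  have hI : f (I • y) = -(I • f y) := by simp [f.map_smulₛₗ]
  have hsub : f x - I • f y = f (x + I • y) := by rw [map_add, hI, sub_eq_add_neg]
  have hadd : f x + I • f y = f (x - I • y) := by rw [map_sub, hI, sub_neg_eq_add]
  rw [inner_eq_sum_norm_sq_div_four, inner_eq_sum_norm_sq_div_four (𝕜 := ℂ) y x]
  simp only [← map_add, ← map_sub, RCLike.I_to_complex, hsub, hadd, f.norm_map, hrot,
    add_comm y x, norm_sub_rev y x]

end LinearIsometry

namespace LinearIsometryEquiv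

theorem inner_map_map_conj {E F : Type*} [NormedAddCommGroup E] [InnerProductSpace ℂ E]
    [NormedAddCommGroup F] [InnerProductSpace ℂ F] (U : E ≃ₗᵢ⋆[ℂ] F) (x y : E) :
    inner ℂ (U x) (U y) = inner ℂ y x :=
  U.toLinearIsometry.inner_map_map_conj x y

variable {H : Type*} [NormedAddCommGroup H] [InnerProductSpace ℂ H] [CompleteSpace H]
  (U : H ≃ₗᵢ⋆[ℂ] H)

noncomputable def conjStarAlgHom : (H →L[ℂ] H) →⋆ₐ[ℝ] (H →L[ℂ] H) where
  toFun L := (U : H →SL[starRingEnd ℂ] H).comp (L.comp (U.symm : H →SL[starRingEnd ℂ] H))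
  map_one' := by ext; simp
  map_mul' _ _ := by ext; simp
  map_zero' := by ext; simp
  map_add' _ _ := by ext; simp
  commutes' r := by ext; simp [Algebra.algebraMap_eq_smul_one, ← Complex.coe_smul]
  map_star' L := by
    rw [star_eq_adjoint, star_eq_adjoint, eq_adjoint_iff]
    intro x y
    simp only [toContinuousLinearEquiv_symm, comp_apply, ContinuousLinearEquiv.coe_coe,
      coe_symm_toContinuousLinearEquiv, coe_toContinuousLinearEquiv]
    conv_lhs => rw [← U.apply_symm_apply y]
    conv_rhs => rw [← U.apply_symm_apply x]
    rw [inner_map_map_conj, inner_map_map_conj, adjoint_inner_right]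

@[simp]
theorem conjStarAlgHom_apply (L : H →L[ℂ] H) (x : H) :
    U.conjStarAlgHom L x = U (L (U.symm x)) :=
  rfl

theorem conjStarAlgHom_smul (c : ℂ) (L : H →L[ℂ] H) :
    U.conjStarAlgHom (c • L) = star c • U.conjStarAlgHom L := by
  ext
  simp only [conjStarAlgHom_apply, _root_.smul_apply, map_smulₛₗ]
  rfl

theorem continuous_conjStarAlgHom : Continuous U.conjStarAlgHom := by
  refine AddMonoidHomClass.continuous_of_bound U.conjStarAlgHom 1 fun L => ?_
  rw [one_mul]
  refine opNorm_le_bound _ (norm_nonneg L) fun x => ?_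
  simpa using L.le_opNorm (U.symm x)

theorem conjStarAlgHom_cfc {f : ℝ → ℝ} (hf : Continuous f) {A : H →L[ℂ] H}
    (hA : IsSelfAdjoint A) : U.conjStarAlgHom (cfc f A) = cfc f (U.conjStarAlgHom A) :=
  StarAlgHom.map_cfc U.conjStarAlgHom f A hf.continuousOn U.continuous_conjStarAlgHom

/-- With `U = J̃`, the paper's `sp_∞(H)` is the set of compact elements of `U.sp`. -/
noncomputable def sp : Submodule ℂ (H →L[ℂ] H) where
  carrier := {X | U.conjStarAlgHom (star X) = -X}
  add_mem' {X Y} (hX : _ = -X) (hY : _ = -Y) := by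
    change U.conjStarAlgHom (star (X + Y)) = -(X + Y)
    rw [star_add, _root_.map_add, hX, hY, neg_add]
  zero_mem' := by simp
  smul_mem' c X (hX : _ = -X) := by
    change U.conjStarAlgHom (star (c • X)) = -(c • X)
    rw [star_smul, conjStarAlgHom_smul, hX, star_star, smul_neg]

variable {U}

theorem mem_sp {X : H →L[ℂ] H} : X ∈ U.sp ↔ U.conjStarAlgHom (star X) = -X :=
  Iff.rfl

theorem star_mem_sp {X : H →L[ℂ] H} (hX : X ∈ U.sp) : star X ∈ U.sp := by
  rw [mem_sp, star_star]
  conv_lhs => rw [← star_star X]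
  rw [map_star, mem_sp.mp hX, star_neg]

end LinearIsometryEquiv

section PosPart

variable {A : Type*} [Ring A] [StarRing A] [TopologicalSpace A] [Algebra ℝ A]
  [ContinuousFunctionalCalculus ℝ A IsSelfAdjoint] {a : A}

theorem cfc_posPart_sub_cfc_negPart (ha : IsSelfAdjoint a) :
    cfc (·⁺ : ℝ → ℝ) a - cfc (·⁻ : ℝ → ℝ) a = a := by
  conv_rhs => rw [← cfc_id' ℝ a]
  rw [← cfc_sub ..]
  congr 1 with x
  exact posPart_sub_negPart x

theorem cfc_posPart_mul_self (ha : IsSelfAdjoint a) :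
    cfc (·⁺ : ℝ → ℝ) a * cfc (·⁺ : ℝ → ℝ) a = a * cfc (·⁺ : ℝ → ℝ) a :=
  calc _ = cfc (fun x : ℝ => x * x⁺) a := by
        rw [← cfc_mul ..]
        congr 1 with x
        rcases le_total 0 x with h | h
        · rw [posPart_eq_self.mpr h]
        · rw [posPart_eq_zero.mpr h, mul_zero, mul_zero]
    _ = _ := by rw [cfc_mul (fun x : ℝ => x) _ a, cfc_id' ℝ a]

theorem cfc_sqrt_posPart_mul_self (a : A) :
    cfc (fun x : ℝ => √x⁺) a * cfc (fun x : ℝ => √x⁺) a = cfc (·⁺ : ℝ → ℝ) a := by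
  rw [← cfc_mul ..]
  congr 1 with x
  exact Real.mul_self_sqrt (posPart_nonneg x)

end PosPart

section Compact

open Metric Set

theorem TotallyBounded.image_of_dist_sq_le {α β γ : Type*} [PseudoMetricSpace β]
    [PseudoMetricSpace γ] {f : α → β} {g : α → γ} {s : Set α} (hf : TotallyBounded (f '' s))
    {C : ℝ} (h : ∀ x ∈ s, ∀ y ∈ s, dist (g x) (g y) ^ 2 ≤ C * dist (f x) (f y)) :
    TotallyBounded (g '' s) := by
  rw [totallyBounded_iff]
  intro ε hε
  set δ := ε ^ 2 / (|C| + 1)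
  obtain ⟨u, hus, hufin, hcover⟩ : ∃ u ⊆ s, u.Finite ∧ f '' s ⊆ ⋃ y ∈ f '' u, ball y δ :=
    exists_subset_image_finite_and.mp (finite_approx_of_totallyBounded hf δ (by positivity))
  refine ⟨g '' u, hufin.image g, ?_⟩
  rintro _ ⟨x, hx, rfl⟩
  obtain ⟨_, ⟨y, hy, rfl⟩, hxy⟩ := mem_iUnion₂.mp (hcover ⟨x, hx, rfl⟩)
  refine mem_biUnion (mem_image_of_mem g hy) (mem_ball.mpr ?_)
  have hsq : dist (g x) (g y) ^ 2 < ε ^ 2 :=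
    calc dist (g x) (g y) ^ 2 ≤ C * dist (f x) (f y) := h x hx y (hus hy)
      _ ≤ |C| * δ := by
        gcongr
        · exact le_abs_self C
        · exact (mem_ball.mp hxy).le
      _ < ε ^ 2 := by
        rw [mul_div_assoc', div_lt_iff₀ (by positivity)]
        nlinarith [abs_nonneg C]
  exact lt_of_pow_lt_pow_left₀ 2 hε.le hsq

variable {𝕜 E F : Type*} [RCLike 𝕜] [NormedAddCommGroup E] [InnerProductSpace 𝕜 E]
  [CompleteSpace E] [NormedAddCommGroup F] [InnerProductSpace 𝕜 F] [CompleteSpace F]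

theorem IsCompactOperator.of_adjoint_comp_self {X : E →L[𝕜] F}
    (h : IsCompactOperator (adjoint X ∘L X)) : IsCompactOperator X := by
  refine (isCompactOperator_iff_isCompact_closure_image_closedBall (X : E →ₗ[𝕜] F) one_pos).mpr
    ((TotallyBounded.closure ?_).isCompact_of_isClosed isClosed_closure)
  have hTB := (h.isCompact_closure_image_closedBall 1).totallyBounded.subset subset_closure
  -- `‖X z‖² = re ⟪X* X z, z⟫ ≤ 2 ‖X* X z‖` for `z = x - y` with `x, y` in the unit ball
  refine hTB.image_of_dist_sq_le (C := 2) fun x hx y hy => ?_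
  have hxy : ‖x - y‖ ≤ 2 := by
    rw [mem_closedBall_zero_iff] at hx hy
    linarith [norm_sub_le x y]
  rw [dist_eq_norm, dist_eq_norm, ← map_sub, ← map_sub, coe_coe, coe_coe,
    apply_norm_sq_eq_inner_adjoint_left]
  calc RCLike.re (inner 𝕜 ((adjoint X ∘L X) (x - y)) (x - y))
      ≤ ‖(adjoint X ∘L X) (x - y)‖ * ‖x - y‖ :=
        (RCLike.re_le_norm _).trans (norm_inner_le_norm _ _)
    _ ≤ 2 * ‖(adjoint X ∘L X) (x - y)‖ := by rw [mul_comm]; gcongr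

theorem IsCompactOperator.adjoint {X : E →L[𝕜] F} (hX : IsCompactOperator X) :
    IsCompactOperator (adjoint X) :=
  .of_adjoint_comp_self <| by
    rw [adjoint_adjoint, coe_comp]
    exact hX.comp_clm _

end Compact

section Spectral

open Submodule Module.End

universe u v

variable {𝕜 : Type u} {E : Type v} [RCLike 𝕜] [NormedAddCommGroup E] [InnerProductSpace 𝕜 E]
  [CompleteSpace E]

theorem ContinuousLinearMap.exists_hilbertBasis_eigenvectors {T : E →L[𝕜] E}
    (hT : IsCompactOperator T) (hT' : (T : E →ₗ[𝕜] E).IsSymmetric) :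
    ∃ (ι : Type (max u v)) (b : HilbertBasis ι 𝕜 E) (μ : ι → ℝ),
      ∀ i, T (b i) = (μ i : 𝕜) • b i := by
  let V (μ : 𝕜) := eigenspace (T : E →ₗ[𝕜] E) μ
  choose w b _ using fun μ => exists_hilbertBasis 𝕜 (V μ)
  have hv : Orthonormal 𝕜 fun a : Σ μ, w μ => (b a.1 a.2 : E) :=
    hT'.orthogonalFamily_eigenspaces.orthonormal_sigma_orthonormal fun μ => (b μ).orthonormal
  have hspan : (span 𝕜 (Set.range fun a : Σ μ, w μ => (b a.1 a.2 : E)))ᗮ = ⊥ := by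
    rw [eq_bot_iff, ← T.orthogonalComplement_iSup_eigenspaces_eq_bot hT hT', ← iInf_orthogonal]
    intro x hx
    simp only [mem_iInf, mem_orthogonal']
    intro μ y hy
    have hker : (span 𝕜 (Set.range (b μ))).topologicalClosure ≤
        LinearMap.ker ((innerSL 𝕜 x).comp (V μ).subtypeL : V μ →ₗ[𝕜] 𝕜) := by
      refine topologicalClosure_minimal _ (span_le.mpr ?_) (ContinuousLinearMap.isClosed_ker _)
      rintro _ ⟨j, rfl⟩
      simpa [inner_eq_zero_symm] using (mem_orthogonal _ x).mp hx _ (subset_span ⟨⟨μ, j⟩, rfl⟩)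
    rw [(b μ).dense_span] at hker
    simpa using hker (mem_top (x := ⟨y, hy⟩))
  refine ⟨_, HilbertBasis.mkOfOrthogonalEqBot hv hspan, fun a => RCLike.re a.1, fun a => ?_⟩
  rw [HilbertBasis.coe_mkOfOrthogonalEqBot]
  have heig : T (b a.1 a.2) = a.1 • (b a.1 a.2 : E) := mem_eigenspace_iff.mp (b a.1 a.2).2
  have hreal : (starRingEnd 𝕜) a.1 = a.1 :=
    hT'.conj_eigenvalue_eq_self (hasEigenvalue_of_hasEigenvector ⟨(b a.1 a.2).2, hv.ne_zero a⟩)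
  simpa [RCLike.conj_eq_iff_re.mp hreal] using heig

end Spectral

namespace HilbertBasis

variable {ι H : Type*} [NormedAddCommGroup H] [InnerProductSpace ℂ H] (b : HilbertBasis ι ℂ H)

noncomputable def conj : H ≃ₗᵢ⋆[ℂ] H :=
  b.repr.trans ((starₗᵢ ℂ).trans b.repr.symm)

@[simp]
theorem conj_apply_self (i : ι) : b.conj (b i) = b i := by
  classical
  refine b.repr.symm_apply_eq.mpr (lp.ext (funext fun j => ?_))
  simp [b.repr_self, lp.single_apply, Pi.single_apply, apply_ite star]

@[simp]
theorem conj_conj (x : H) : b.conj (b.conj x) = x := by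
  simp [conj]

theorem conjStarAlgHom_conj_eq_self [CompleteSpace H] {T : H →L[ℂ] H} {μ : ι → ℝ}
    (hT : ∀ i, T (b i) = (μ i : ℂ) • b i) : b.conj.conjStarAlgHom T = T := by
  refine ext_on (Submodule.dense_iff_topologicalClosure_eq_top.mpr b.dense_span) ?_
  rintro _ ⟨i, rfl⟩
  have hsymm : b.conj.symm (b i) = b i := b.conj.symm_apply_eq.mpr (b.conj_apply_self i).symm
  rw [LinearIsometryEquiv.conjStarAlgHom_apply, hsymm, hT, LinearIsometryEquiv.map_smulₛₗ,
    conj_apply_self, Complex.conj_ofReal]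

end HilbertBasis

theorem Submodule.realPart_mem {A : Type*} [AddCommGroup A] [Module ℂ A] [StarAddMonoid A]
    [StarModule ℂ A] {S : Submodule ℂ A} (hS : ∀ a ∈ S, star a ∈ S) {a : A} (ha : a ∈ S) :
    (ℜ a : A) ∈ S := by
  rw [realPart_apply_coe]
  exact S.smul_of_tower_mem _ (S.add_mem ha (hS a ha))

theorem Submodule.imaginaryPart_mem {A : Type*} [AddCommGroup A] [Module ℂ A] [StarAddMonoid A]
    [StarModule ℂ A] {S : Submodule ℂ A} (hS : ∀ a ∈ S, star a ∈ S) {a : A} (ha : a ∈ S) :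
    (ℑ a : A) ∈ S := by
  rw [imaginaryPart_apply_coe]
  exact S.smul_mem _ (S.smul_of_tower_mem _ (S.sub_mem ha (hS a ha)))

/-- The inverse is `-J`, so that `(ofAntiConjugation J ..).symm v` unfolds to `-J v`. -/
noncomputable def LinearIsometryEquiv.ofAntiConjugation {H : Type*} [NormedAddCommGroup H]
    [InnerProductSpace ℂ H] (J : H → H)
    (hadd : ∀ v w, J (v + w) = J v + J w)
    (hsmul : ∀ (c : ℂ) (v : H), J (c • v) = (starRingEnd ℂ) c • J v)
    (hnorm : ∀ v, ‖J v‖ = ‖v‖) (hJJ : ∀ v, J (J v) = -v) : H ≃ₗᵢ⋆[ℂ] H where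
  toFun := J
  invFun v := -J v
  map_add' := hadd
  map_smul' := hsmul
  left_inv v := by
    change -J (J v) = v
    rw [hJJ, neg_neg]
  right_inv v := by
    change J (-J v) = v
    rw [← neg_one_smul ℂ (J v), hsmul, map_neg, map_one, hJJ, neg_one_smul, neg_neg]
  norm_map' := hnorm

section Construction

variable {H : Type*} [NormedAddCommGroup H] [InnerProductSpace ℂ H] [CompleteSpace H]

theorem IsCompactOperator.of_star_mul_self {X : H →L[ℂ] H}
    (h : IsCompactOperator ⇑(star X * X : H →L[ℂ] H)) : IsCompactOperator X :=
  .of_adjoint_comp_self h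

theorem IsCompactOperator.cfc_posPart {A : H →L[ℂ] H} (hAc : IsCompactOperator A)
    (hA : IsSelfAdjoint A) : IsCompactOperator ⇑(cfc (·⁺ : ℝ → ℝ) A : H →L[ℂ] H) := by
  refine .of_star_mul_self ?_
  rw [(cfc_predicate _ A : IsSelfAdjoint _).star_eq, cfc_posPart_mul_self hA]
  exact hAc.comp_clm _

theorem LinearIsometryEquiv.conjStarAlgHom_cfc_posPart {J : H ≃ₗᵢ⋆[ℂ] H} {A : H →L[ℂ] H}
    (hA : IsSelfAdjoint A) (hJA : J.conjStarAlgHom A = -A) :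
    J.conjStarAlgHom (cfc (·⁺ : ℝ → ℝ) A) = cfc (·⁻ : ℝ → ℝ) A := by
  rw [J.conjStarAlgHom_cfc (by fun_prop) hA, hJA, ← cfc_comp_neg (·⁺ : ℝ → ℝ) A]
  simp only [posPart_neg]

theorem exists_conj_conjStarAlgHom_eq_self {A : H →L[ℂ] H} (hAc : IsCompactOperator A)
    (hA : IsSelfAdjoint A) :
    ∃ C : H ≃ₗᵢ⋆[ℂ] H, (∀ x, C (C x) = x) ∧ C.conjStarAlgHom A = A := by
  obtain ⟨_, b, _, hb⟩ := exists_hilbertBasis_eigenvectors hAc hA.isSymmetric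
  exact ⟨b.conj, b.conj_conj, b.conjStarAlgHom_conj_eq_self hb⟩

theorem exists_selfCommutator_eq_of_conj {J C : H ≃ₗᵢ⋆[ℂ] H} (hJ : ∀ x, J (J x) = -x)
    (hC : ∀ x, C (C x) = x) {A : H →L[ℂ] H} (hAc : IsCompactOperator A) (hA : IsSelfAdjoint A)
    (hJA : J.conjStarAlgHom A = -A) (hCA : C.conjStarAlgHom A = A) :
    ∃ X : H →L[ℂ] H, IsCompactOperator X ∧ X ∈ J.sp ∧ star X * X - X * star X = A := by
  set R := cfc (fun x : ℝ => √x⁺) A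
  have hR : IsSelfAdjoint R := cfc_predicate _ A
  have hCsymm (x : H) : C.symm x = C x := C.symm_apply_eq.mpr (hC x).symm
  have hJsymm (x : H) : J.symm (J.symm x) = -x := by
    rw [J.symm_apply_eq, J.symm_apply_eq, hJ, neg_neg]
  have hCR (x : H) : C (R x) = R (C x) := by
    have := DFunLike.congr_fun
      (C.conjStarAlgHom_cfc (f := fun x : ℝ => √x⁺) (by fun_prop) hA) (C x)
    rwa [hCA, LinearIsometryEquiv.conjStarAlgHom_apply, C.symm_apply_apply] at this
  have hRR : R * R = cfc (·⁺ : ℝ → ℝ) A := cfc_sqrt_posPart_mul_self A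
  let V : H ≃ₗᵢ[ℂ] H := C.trans J
  have hstar : star ((V : H →L[ℂ] H) * R) = R * (V.symm : H →L[ℂ] H) := by
    rw [star_mul, hR.star_eq, star_eq_adjoint, V.adjoint_eq_symm]
  have hXX : star ((V : H →L[ℂ] H) * R) * ((V : H →L[ℂ] H) * R) = cfc (·⁺ : ℝ → ℝ) A := by
    rw [hstar, ← hRR]
    ext x
    simp [V]
  refine ⟨(V : H →L[ℂ] H) * R, .of_star_mul_self (hXX ▸ hAc.cfc_posPart hA), ?_, ?_⟩
  · rw [LinearIsometryEquiv.mem_sp, hstar]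
    ext x
    simp [V, hJsymm, hCsymm, ← hCR]
  · have hXX' : (V : H →L[ℂ] H) * R * star ((V : H →L[ℂ] H) * R) = cfc (·⁻ : ℝ → ℝ) A := by
      rw [hstar, ← J.conjStarAlgHom_cfc_posPart hA hJA, ← hRR]
      ext x
      simp [V, hCsymm, ← hCR, hC]
    rw [hXX, hXX', cfc_posPart_sub_cfc_negPart hA]

theorem exists_selfCommutator_eq {J : H ≃ₗᵢ⋆[ℂ] H} (hJ : ∀ x, J (J x) = -x) {A : H →L[ℂ] H}
    (hAc : IsCompactOperator A) (hA : IsSelfAdjoint A) (hAJ : A ∈ J.sp) :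
    ∃ X : H →L[ℂ] H, IsCompactOperator X ∧ X ∈ J.sp ∧ star X * X - X * star X = A := by
  obtain ⟨C, hC, hCA⟩ := exists_conj_conjStarAlgHom_eq_self hAc hA
  exact exists_selfCommutator_eq_of_conj hJ hC hAc hA (by rw [← J.mem_sp.mp hAJ, hA.star_eq]) hCA

end Construction

theorem stmt_11_general {H : Type*} [NormedAddCommGroup H] [InnerProductSpace ℂ H] [CompleteSpace H]
    (J : H → H)
    (hadd : ∀ v w, J (v + w) = J v + J w)
    (hsmul : ∀ (c : ℂ) (v : H), J (c • v) = (starRingEnd ℂ) c • J v)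
    (hnorm : ∀ v, ‖J v‖ = ‖v‖)
    (hJJ : ∀ v, J (J v) = -v)
    (T : H →L[ℂ] H) (hcpt : IsCompactOperator ⇑T)
    (hTJ : ∀ v, T v = -(J (adjoint T (-(J v))))) :
    ∃ X Y : H →L[ℂ] H, IsCompactOperator ⇑X ∧ IsCompactOperator ⇑Y ∧
      (∀ v, X v = -(J (adjoint X (-(J v))))) ∧
      (∀ v, Y v = -(J (adjoint Y (-(J v))))) ∧
      T = (adjoint X ∘L X - X ∘L adjoint X) +
        Complex.I • (adjoint Y ∘L Y - Y ∘L adjoint Y) := by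
  let U := LinearIsometryEquiv.ofAntiConjugation J hadd hsmul hnorm hJJ
  have hsp (X : H →L[ℂ] H) : X ∈ U.sp ↔ ∀ v, X v = -(J (adjoint X (-(J v)))) := by
    rw [LinearIsometryEquiv.mem_sp, ContinuousLinearMap.ext_iff]
    exact forall_congr' fun v => neg_eq_iff_eq_neg.symm.trans eq_comm
  let S := compactOperator (RingHom.id ℂ) H H ⊓ U.sp
  have hS : ∀ X ∈ S, star X ∈ S := fun X hX =>
    ⟨hX.1.adjoint, LinearIsometryEquiv.star_mem_sp hX.2⟩
  have hT : T ∈ S := ⟨hcpt, (hsp T).mpr hTJ⟩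
  have hre := Submodule.realPart_mem hS hT
  have him := Submodule.imaginaryPart_mem hS hT
  obtain ⟨X, hXc, hX, hXA⟩ := exists_selfCommutator_eq hJJ hre.1 (ℜ T).2 hre.2
  obtain ⟨Y, hYc, hY, hYB⟩ := exists_selfCommutator_eq hJJ him.1 (ℑ T).2 him.2
  refine ⟨X, Y, hXc, hYc, (hsp X).mp hX, (hsp Y).mp hY, ?_⟩
  simp only [← star_eq_adjoint, ← mul_def, hXA, hYB]
  exact (realPart_add_I_smul_imaginaryPart T).symm

theorem stmt_11 {H : Type*} [NormedAddCommGroup H] [InnerProductSpace ℂ H] [CompleteSpace H]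
    (b : HilbertBasis ℕ ℂ H)
    (J : H → H)
    (hadd : ∀ v w, J (v + w) = J v + J w)
    (hsmul : ∀ (c : ℂ) (v : H), J (c • v) = (starRingEnd ℂ) c • J v)
    (hnorm : ∀ v, ‖J v‖ = ‖v‖)
    (hbij : Function.Bijective J)
    (hJJ : ∀ v, J (J v) = -v)
    (T : H →L[ℂ] H) (hcpt : IsCompactOperator ⇑T)
    (hTJ : ∀ v, T v = -(J (adjoint T (-(J v))))) :
    ∃ X Y : H →L[ℂ] H, IsCompactOperator ⇑X ∧ IsCompactOperator ⇑Y ∧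
      (∀ v, X v = -(J (adjoint X (-(J v))))) ∧
      (∀ v, Y v = -(J (adjoint Y (-(J v))))) ∧
      T = (adjoint X ∘L X - X ∘L adjoint X) +
        Complex.I • (adjoint Y ∘L Y - Y ∘L adjoint Y) :=
  stmt_11_general J hadd hsmul hnorm hJJ T hcpt hTJ
end

section
/- Let L be a finite-dimensional complex semisimple Lie algebra. Then for every A ∈ L there exist X₁, X₂, Y₁, Y₂ ∈ L such that A = ⁅X₁, X₂⁆ + ⁅Y₁, Y₂⁆. -/
/-!
Fix a Cartan subalgebra `H` and an element `h₀ ∈ H` on which no root vanishes. Then `ad h₀` acts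
invertibly on every root space, so `L = H + ⁅h₀, L⁆`. An element `a ∈ H` is a combination
`∑ c α • coroot α = ∑ c α • ⁅e α, f α⁆` of coroots (`e α`, `f α` from `sl₂`-triples), and
`⁅∑ c α • e α, ∑ f β⁆` differs from `a` by off-diagonal terms lying in root spaces of the nonzero
weights `α - β`, hence again in `⁅h₀, L⁆`. So every element is `⁅u, v⁆ + ⁅h₀, y⁆`.
-/

open LieAlgebra LieModule Module LieAlgebra.IsKilling

lemma LieModule.exists_forall_weight_apply_ne_zero {K L M : Type*} [Field K] [Infinite K]
    [LieRing L] [LieAlgebra K L] [AddCommGroup M] [Module K M] [LieRingModule L M]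
    [LieModule K L M] [LieRing.IsNilpotent L] [LinearWeights K L M] [Finite (Weight K L M)] :
    ∃ x : L, ∀ χ : Weight K L M, χ.IsNonZero → χ x ≠ 0 := by
  obtain ⟨x, hx⟩ := Dual.exists_forall_ne_zero_of_forall_exists
    (fun χ : {χ : Weight K L M // χ.IsNonZero} ↦ χ.1.toLinear) fun χ ↦ by
      by_contra! h
      exact χ.2 (funext h)
  exact ⟨x, fun χ hχ ↦ hx ⟨χ, hχ⟩⟩

namespace LieAlgebra.IsKilling

variable {K L : Type*} [Field K] [CharZero K] [LieRing L] [LieAlgebra K L] [FiniteDimensional K L]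
  [IsKilling K L] {H : LieSubalgebra K L} [H.IsCartanSubalgebra] [IsTriangularizable K H L]

lemma rootSpace_le_range_ad {χ : H → K} {h₀ : H} (hχ : χ h₀ ≠ 0) :
    (rootSpace H χ : Submodule K L) ≤ LinearMap.range (ad K L h₀) := fun x hx ↦ by
  refine ⟨(χ h₀)⁻¹ • x, ?_⟩
  rw [ad_apply, lie_smul, ← LieSubalgebra.coe_bracket_of_module, lie_eq_smul_of_mem_rootSpace hx,
    inv_smul_smul₀ hχ]

lemma exists_lie_eq_coroot {α : Weight K H L} (hα : α.IsNonZero) :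
    ∃ e ∈ rootSpace H α, ∃ f ∈ rootSpace H (-α), ⁅e, f⁆ = (coroot α : L) := by
  obtain ⟨h, e, f, ht, he, hf⟩ := exists_isSl2Triple_of_weight_isNonZero hα
  exact ⟨e, he, f, hf, ht.lie_e_f.trans (ht.h_eq_coroot hα he hf)⟩

variable {h₀ : H}

lemma rootSpace_le_range_ad_of_ne_zero (hreg : ∀ α : Weight K H L, α.IsNonZero → α h₀ ≠ 0)
    {χ : H → K} (hχ : χ ≠ 0) :
    (rootSpace H χ : Submodule K L) ≤ LinearMap.range (ad K L h₀) := by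
  by_cases hbot : rootSpace H χ = ⊥
  · simp [hbot]
  · exact rootSpace_le_range_ad (hreg ⟨χ, hbot⟩ hχ)

lemma cartan_sup_range_ad_eq_top (hreg : ∀ α : Weight K H L, α.IsNonZero → α h₀ ≠ 0) :
    (H : Submodule K L) ⊔ LinearMap.range (ad K L h₀) = ⊤ := by
  rw [eq_top_iff, ← LieSubmodule.top_toSubmodule (R := K) (L := H),
    ← iSup_genWeightSpace_eq_top K H L, LieSubmodule.iSup_toSubmodule]
  refine iSup_le fun χ ↦ ?_
  rcases eq_or_ne χ 0 with rfl | hχ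
  · rw [← rootSpace, rootSpace_zero_eq K L H]
    exact le_sup_left
  · exact (rootSpace_le_range_ad_of_ne_zero hreg hχ).trans le_sup_right

lemma exists_lie_sub_mem_range_ad (hreg : ∀ α : Weight K H L, α.IsNonZero → α h₀ ≠ 0)
    (a : H) :
    ∃ u v : L, ⁅u, v⁆ - a ∈ LinearMap.range (ad K L h₀) := by
  classical
  choose e he f hf hef using fun α : H.root ↦ exists_lie_eq_coroot (H.isNonZero_coe_root α)
  obtain ⟨c, hc⟩ := (Submodule.mem_span_range_iff_exists_fun K).mp
    ((RootPairing.IsRootSystem.span_coroot_eq_top (P := rootSystem H)).ge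
      (Submodule.mem_top (x := a)))
  refine ⟨∑ α, c α • e α, ∑ β, f β, ?_⟩
  have hsplit : ⁅∑ α, c α • e α, ∑ β, f β⁆ - a =
      ∑ α, ∑ β,
        (c α • ⁅e α, f β⁆ - if α = β then c α • (coroot (α : Weight K H L) : L) else 0) := by
    simp [sum_lie_sum, Finset.sum_sub_distrib, ← hc]
  rw [hsplit]
  refine Submodule.sum_mem _ fun α _ ↦ Submodule.sum_mem _ fun β _ ↦ ?_
  split_ifs with hαβ
  · simp [hαβ, hef]
  · rw [sub_zero]
    refine Submodule.smul_mem _ _ (rootSpace_le_range_ad_of_ne_zero hreg ?_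
      (lie_mem_genWeightSpace_of_mem_genWeightSpace (he α) (hf β)))
    rw [← sub_eq_add_neg, sub_ne_zero]
    exact fun h ↦ hαβ (Subtype.ext (Weight.ext (congr_fun h)))

lemma exists_lie_add_lie_eq (hreg : ∀ α : Weight K H L, α.IsNonZero → α h₀ ≠ 0)
    (A : L) : ∃ u v y : L, ⁅u, v⁆ + ⁅(h₀ : L), y⁆ = A := by
  obtain ⟨a, ha, -, ⟨y, rfl⟩, rfl⟩ :=
    Submodule.mem_sup.mp ((cartan_sup_range_ad_eq_top hreg).ge (Submodule.mem_top (x := A)))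
  obtain ⟨u, v, z, hz⟩ := exists_lie_sub_mem_range_ad hreg ⟨a, ha⟩
  refine ⟨u, v, y - z, ?_⟩
  rw [ad_apply] at hz ⊢
  rw [lie_sub, hz]
  abel

end LieAlgebra.IsKilling

theorem stmt_13 {L : Type*} [LieRing L] [LieAlgebra ℂ L] [Module.Finite ℂ L]
    [LieAlgebra.IsKilling ℂ L] :
    ∀ A : L, ∃ X₁ X₂ Y₁ Y₂ : L, A = ⁅X₁, X₂⁆ + ⁅Y₁, Y₂⁆ := by
  intro A
  obtain ⟨x, _⟩ := exists_isCartanSubalgebra_engel ℂ L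
  obtain ⟨h₀, hreg⟩ := 
    exists_forall_weight_apply_ne_zero (K := ℂ) (L := LieSubalgebra.engel ℂ x) (M := L)
  obtain ⟨u, v, y, rfl⟩ := exists_lie_add_lie_eq hreg A
  exact ⟨u, v, h₀, y, rfl⟩
end

section
/- Let n ≥ 1 and let sl(n,ℂ) = {X ∈ M_n(ℂ) : Tr X = 0} be the special linear Lie algebra. Then for every A ∈ sl(n,ℂ) there exist X, Y ∈ sl(n,ℂ) such that X·Y − Y·X = A. -/
/-!
A traceless matrix over a field of characteristic zero is conjugate to one with zero diagonal.
Some diagonal entry differs from `A i i` (otherwise `A` is scalar, and a traceless scalar matrix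
vanishes), and one or two conjugations by transvections then clear `A i i`; induction on the
complementary block clears the rest of the diagonal. A zero-diagonal matrix `B` is the commutator
of `D = diag(d₁, …, dₙ)` with distinct `dᵢ` and `Y = (B i j / (dᵢ - dⱼ))`, and shifting `D` by a
scalar makes it traceless without changing the commutator.
-/

open Function

namespace Matrix

variable {ι K : Type*} [Field K]

def conjTransvection [Fintype ι] [DecidableEq ι] (i j : ι) (c : K) (A : Matrix ι ι K) :
    Matrix ι ι K :=
  transvection i j c * A * transvection i j (-c)

def IsTracelessCommutator [Fintype ι] (A : Matrix ι ι K) : Prop :=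
  ∃ X Y : Matrix ι ι K, X.trace = 0 ∧ Y.trace = 0 ∧ X * Y - Y * X = A

theorem exists_apply_self_ne_of_trace_eq_zero [Fintype ι] [CharZero K] {A : Matrix ι ι K}
    (hA : A.trace = 0) {i : ι} (hi : A i i ≠ 0) : ∃ j, A j j ≠ A i i := by
  by_contra! h
  have : Nonempty ι := ⟨i⟩
  have htrace : A.trace = Fintype.card ι • A i i := by simp [trace, h]
  rw [hA, eq_comm, smul_eq_zero] at htrace
  exact htrace.elim Fintype.card_ne_zero hi

section Transvection

variable [Fintype ι] [DecidableEq ι] {i j : ι}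

theorem isConj_conjTransvection (hij : i ≠ j) (c : K) (A : Matrix ι ι K) :
    IsConj A (conjTransvection i j c A) := by
  refine ⟨⟨transvection i j c, transvection i j (-c), ?_, ?_⟩, ?_⟩
  · simp [transvection_mul_transvection_same _ _ hij]
  · simp [transvection_mul_transvection_same _ _ hij]
  · simp [SemiconjBy, conjTransvection, mul_assoc, transvection_mul_transvection_same _ _ hij]

theorem conjTransvection_apply_left_left (hij : i ≠ j) (c : K) (A : Matrix ι ι K) :
    conjTransvection i j c A i i = A i i + c * A j i := by
  simp [conjTransvection, transvection, Matrix.add_mul, Matrix.mul_add, hij, hij.symm]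

theorem conjTransvection_apply_right_right (hij : i ≠ j) (c : K) (A : Matrix ι ι K) :
    conjTransvection i j c A j j = A j j - c * A j i := by
  simp [conjTransvection, transvection, Matrix.add_mul, Matrix.mul_add,
    single_mul_apply_of_ne (h := hij.symm), hij]
  ring

theorem conjTransvection_apply_left_right (i j : ι) (c : K) (A : Matrix ι ι K) :
    conjTransvection i j c A i j = A i j + c * (A j j - A i i) - c ^ 2 * A j i := by
  simp [conjTransvection, transvection, Matrix.add_mul, Matrix.mul_add]
  ring

theorem exists_isConj_apply_self_eq_zero_of_col_apply_ne_zero {A : Matrix ι ι K}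
    (hij : i ≠ j) (hji : A j i ≠ 0) : ∃ B, IsConj A B ∧ B i i = 0 :=
  ⟨_, isConj_conjTransvection hij (-A i i / A j i) A, by
    rw [conjTransvection_apply_left_left hij]; field_simp; ring⟩

theorem exists_isConj_apply_self_eq_zero_of_row_apply_ne_zero {A : Matrix ι ι K}
    (hij : i ≠ j) (hij' : A i j ≠ 0) : ∃ B, IsConj A B ∧ B i i = 0 :=
  ⟨_, isConj_conjTransvection hij.symm (A i i / A i j) A, by
    rw [conjTransvection_apply_right_right hij.symm]; field_simp; ring⟩

theorem exists_isConj_apply_self_eq_zero [CharZero K] {A : Matrix ι ι K} (hA : A.trace = 0)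
    (i : ι) : ∃ B, IsConj A B ∧ B i i = 0 := by
  by_cases hi : A i i = 0
  · exact ⟨A, .refl A, hi⟩
  obtain ⟨j, hj⟩ := exists_apply_self_ne_of_trace_eq_zero hA hi
  have hij : i ≠ j := by rintro rfl; exact hj rfl
  by_cases hji : A j i = 0
  · set c := (1 - A i j) / (A j j - A i i)
    have hc : conjTransvection i j c A i j = 1 := by
      rw [conjTransvection_apply_left_right, hji]
      simp only [c]
      field_simp [sub_ne_zero.mpr hj]
      ring
    obtain ⟨B, hB, hBi⟩ :=
      exists_isConj_apply_self_eq_zero_of_row_apply_ne_zero hij (hc ▸ one_ne_zero)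
    exact ⟨B, (isConj_conjTransvection hij c A).trans hB, hBi⟩
  · exact exists_isConj_apply_self_eq_zero_of_col_apply_ne_zero hij hji

end Transvection

theorem trace_eq_of_isConj [Fintype ι] [DecidableEq ι] {A B : Matrix ι ι K} (h : IsConj A B) :
    A.trace = B.trace := by
  obtain ⟨c, hc⟩ := h
  rw [← trace_units_conj c A, hc.eq, Matrix.mul_assoc, Units.mul_inv, Matrix.mul_one]

theorem isConj_reindex {m n : Type*} [Fintype m] [Fintype n] [DecidableEq m] [DecidableEq n]
    (e : m ≃ n) {A B : Matrix m m K} (h : IsConj A B) : IsConj (reindex e e A) (reindex e e B) :=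
  (reindexAlgEquiv K K e : Matrix m m K →* Matrix n n K).map_isConj h

theorem trace_reindex {m n : Type*} [Fintype m] [Fintype n] (e : m ≃ n) (A : Matrix m m K) :
    (reindex e e A).trace = A.trace :=
  e.symm.sum_comp A.diag

section Blocks

variable {m o : Type*}

theorem trace_eq_add_trace_toBlocks [Fintype m] [Fintype o] (M : Matrix (m ⊕ o) (m ⊕ o) K) :
    M.trace = M.toBlocks₁₁.trace + M.toBlocks₂₂.trace :=
  Fintype.sum_sum_type _

theorem diag_eq_zero_of_toBlocks {M : Matrix (m ⊕ o) (m ⊕ o) K}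
    (h₁ : M.toBlocks₁₁.diag = 0) (h₂ : M.toBlocks₂₂.diag = 0) : M.diag = 0 := by
  ext (i | i)
  · exact congrFun h₁ i
  · exact congrFun h₂ i

theorem exists_isConj_toBlocks₁₁_eq [Fintype m] [Fintype o] [DecidableEq m] [DecidableEq o]
    {M : Matrix (m ⊕ o) (m ⊕ o) K} {B : Matrix m m K} (h : IsConj M.toBlocks₁₁ B) :
    ∃ M', IsConj M M' ∧ M'.toBlocks₁₁ = B ∧ M'.toBlocks₂₂ = M.toBlocks₂₂ := by
  obtain ⟨c, hc⟩ := h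
  let C : (Matrix (m ⊕ o) (m ⊕ o) K)ˣ :=
    ⟨fromBlocks c 0 0 1, fromBlocks ↑c⁻¹ 0 0 1, by simp [fromBlocks_multiply],
      by simp [fromBlocks_multiply]⟩
  refine ⟨fromBlocks B ((c : Matrix m m K) * M.toBlocks₁₂)
    (M.toBlocks₂₁ * (↑c⁻¹ : Matrix m m K)) M.toBlocks₂₂, ⟨C, ?_⟩,
    toBlocks_fromBlocks₁₁ .., toBlocks_fromBlocks₂₂ ..⟩
  unfold SemiconjBy
  rw [← fromBlocks_toBlocks M]
  simp only [C, fromBlocks_multiply]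
  simp [Matrix.mul_assoc, hc.eq]

end Blocks

theorem exists_isConj_diag_eq_zero [CharZero K] :
    ∀ {n : ℕ} {A : Matrix (Fin n) (Fin n) K}, A.trace = 0 → ∃ B, IsConj A B ∧ B.diag = 0
  | 0, A, _ => ⟨A, .refl A, funext fun i => i.elim0⟩
  | n + 1, A, hA => by
    let e : Fin (n + 1) ≃ Fin n ⊕ Fin 1 := finSumFinEquiv.symm
    obtain ⟨A₁, hAA₁, hA₁⟩ := exists_isConj_apply_self_eq_zero hA (e.symm (.inr 0))
    let M := reindex e e A₁
    have hM₂₂ : M.toBlocks₂₂.diag = 0 := by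
      ext i
      simpa [M, Subsingleton.elim i 0, toBlocks₂₂] using hA₁
    have hM₁₁ : M.toBlocks₁₁.trace = 0 := by
      have h := trace_eq_add_trace_toBlocks M
      rw [trace_reindex, ← trace_eq_of_isConj hAA₁, hA, trace_fin_one,
        show M.toBlocks₂₂ 0 0 = 0 from congrFun hM₂₂ 0, add_zero] at h
      exact h.symm
    obtain ⟨B, hB, hBdiag⟩ := exists_isConj_diag_eq_zero hM₁₁
    obtain ⟨M', hMM', hM'₁₁, hM'₂₂⟩ := exists_isConj_toBlocks₁₁_eq hB
    refine ⟨reindex e.symm e.symm M', ?_, ?_⟩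
    · have hM : reindex e.symm e.symm M = A₁ := by simp [M]
      exact hAA₁.trans (hM ▸ isConj_reindex e.symm hMM')
    · have hM' : M'.diag = 0 := diag_eq_zero_of_toBlocks (hM'₁₁ ▸ hBdiag) (hM'₂₂ ▸ hM₂₂)
      ext i
      exact congrFun hM' (e i)

section Commutator

variable [Fintype ι] [DecidableEq ι]

theorem isTracelessCommutator_of_isConj {A B : Matrix ι ι K} (h : IsConj A B)
    (hB : B.IsTracelessCommutator) : A.IsTracelessCommutator := by
  obtain ⟨c, hc⟩ := h.symm
  obtain ⟨X, Y, hX, hY, rfl⟩ := hB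
  refine ⟨c * X * (↑c⁻¹ : Matrix ι ι K), c * Y * (↑c⁻¹ : Matrix ι ι K),
    by rwa [trace_units_conj], by rwa [trace_units_conj], ?_⟩
  calc (c * X * (↑c⁻¹ : Matrix ι ι K)) * (c * Y * (↑c⁻¹ : Matrix ι ι K))
        - (c * Y * (↑c⁻¹ : Matrix ι ι K)) * (c * X * (↑c⁻¹ : Matrix ι ι K))
      = c * (X * Y - Y * X) * (↑c⁻¹ : Matrix ι ι K) := by
        simp [Matrix.mul_assoc, mul_sub, sub_mul]
    _ = A := by rw [hc.eq, Matrix.mul_assoc, Units.mul_inv, Matrix.mul_one]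

theorem exists_trace_eq_zero_diagonal_mul_sub_eq {d : ι → K} (hd : Injective d)
    {B : Matrix ι ι K} (hB : B.diag = 0) :
    ∃ Y : Matrix ι ι K, Y.trace = 0 ∧ diagonal d * Y - Y * diagonal d = B := by
  -- the diagonal entries of `Y` are `B i i / 0 = 0`
  refine ⟨of fun i j => B i j / (d i - d j), by simp [trace], ?_⟩
  ext i j
  rcases eq_or_ne i j with rfl | hij
  · simpa using (congrFun hB i).symm
  · have : d i - d j ≠ 0 := sub_ne_zero.mpr (hd.ne hij)
    simp only [sub_apply, diagonal_mul, mul_diagonal, of_apply]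
    field_simp

theorem isTracelessCommutator_of_diag_eq_zero [CharZero K] {B : Matrix ι ι K}
    (hB : B.diag = 0) : B.IsTracelessCommutator := by
  set D : Matrix ι ι K := diagonal fun i => (Fintype.equivFin ι i : K)
  have hD : Injective fun i => (Fintype.equivFin ι i : K) :=
    Nat.cast_injective.comp (Fin.val_injective.comp (Fintype.equivFin ι).injective)
  obtain ⟨Y, hY, hDY⟩ := exists_trace_eq_zero_diagonal_mul_sub_eq hD hB
  set s := D.trace / Fintype.card ι
  refine ⟨D - s • 1, Y, ?_, hY, ?_⟩
  · rw [trace_sub, trace_smul, trace_one, smul_eq_mul, sub_eq_zero, eq_comm]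
    refine div_mul_cancel_of_imp fun h => ?_
    have : IsEmpty ι := Fintype.card_eq_zero_iff.mp (Nat.cast_eq_zero.mp h)
    exact trace_eq_zero_of_isEmpty D
  · simpa [sub_mul, mul_sub] using hDY

end Commutator

end Matrix

theorem stmt_14_general (n : ℕ) (A : Matrix (Fin n) (Fin n) ℂ)
    (hA : A.trace = 0) :
    ∃ X Y : Matrix (Fin n) (Fin n) ℂ,
      X.trace = 0 ∧ Y.trace = 0 ∧ X * Y - Y * X = A := by
  obtain ⟨B, hAB, hB⟩ := Matrix.exists_isConj_diag_eq_zero hA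
  exact Matrix.isTracelessCommutator_of_isConj hAB
    (Matrix.isTracelessCommutator_of_diag_eq_zero hB)

theorem stmt_14 (n : ℕ) (hn : 1 ≤ n) (A : Matrix (Fin n) (Fin n) ℂ)
    (hA : A.trace = 0) :
    ∃ X Y : Matrix (Fin n) (Fin n) ℂ,
      X.trace = 0 ∧ Y.trace = 0 ∧ X * Y - Y * X = A :=
  stmt_14_general n A hA
end

section
/- Let n ≥ 1 and let sp(n,ℂ) = {X ∈ M_{2n}(ℂ) : Xᵀ·J + J·X = 0} be the complex symplectic Lie algebra, where J = [[0, I_n],[−I_n, 0]] is the standard skew-symmetric form matrix. Then for every A ∈ sp(n,ℂ) there exist X, Y ∈ sp(n,ℂ) such that X·Y − Y·X = A. -/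
open Matrix

/-- The standard skew-symmetric form matrix `J = [[0, Iₙ], [−Iₙ, 0]]`. -/
noncomputable def stdSymplecticMatrix (n : ℕ) :
    Matrix (Fin n ⊕ Fin n) (Fin n ⊕ Fin n) ℂ :=
  Matrix.fromBlocks 0 1 (-1) 0

namespace SpAux
variable {n : ℕ}
abbrev SMat (n : ℕ) := Matrix (Fin n ⊕ Fin n) (Fin n ⊕ Fin n) ℂ

lemma J_mul_apply_inl (B : SMat n) (i : Fin n) (q : Fin n ⊕ Fin n) :
    (stdSymplecticMatrix n * B) (Sum.inl i) q = B (Sum.inr i) q := by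
  simp [stdSymplecticMatrix, Matrix.mul_apply, Fintype.sum_sum_type, Matrix.one_apply]

lemma J_mul_apply_inr (B : SMat n) (i : Fin n) (q : Fin n ⊕ Fin n) :
    (stdSymplecticMatrix n * B) (Sum.inr i) q = - B (Sum.inl i) q := by
  simp [stdSymplecticMatrix, Matrix.mul_apply, Fintype.sum_sum_type, Matrix.one_apply]

lemma mul_J_apply_inl (B : SMat n) (p : Fin n ⊕ Fin n) (j : Fin n) :
    (B * stdSymplecticMatrix n) p (Sum.inl j) = - B p (Sum.inr j) := by
  simp [stdSymplecticMatrix, Matrix.mul_apply, Fintype.sum_sum_type, Matrix.one_apply]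

lemma mul_J_apply_inr (B : SMat n) (p : Fin n ⊕ Fin n) (j : Fin n) :
    (B * stdSymplecticMatrix n) p (Sum.inr j) = B p (Sum.inl j) := by
  simp [stdSymplecticMatrix, Matrix.mul_apply, Fintype.sum_sum_type, Matrix.one_apply]

lemma Jmat_transpose : (stdSymplecticMatrix n)ᵀ = - stdSymplecticMatrix n := by
  ext p q
  rcases p with i | i <;> rcases q with j | j <;>
    simp [stdSymplecticMatrix, Matrix.one_apply, eq_comm]

lemma J_mul_J : stdSymplecticMatrix n * stdSymplecticMatrix n = -1 := by
  ext p q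
  rcases p with i | i <;> rcases q with j | j
  · rw [J_mul_apply_inl]
    simp [stdSymplecticMatrix, Matrix.one_apply, eq_comm]
  · rw [J_mul_apply_inl]
    simp [stdSymplecticMatrix, Matrix.one_apply, eq_comm]
  · rw [J_mul_apply_inr]
    simp [stdSymplecticMatrix, Matrix.one_apply, eq_comm]
  · rw [J_mul_apply_inr]
    simp [stdSymplecticMatrix, Matrix.one_apply, eq_comm]

/-- entrywise relations of membership in sp -/
lemma sp_rel {A : SMat n}
    (h : Aᵀ * stdSymplecticMatrix n + stdSymplecticMatrix n * A = 0) :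
    (∀ i j, A (Sum.inr i) (Sum.inl j) = A (Sum.inr j) (Sum.inl i)) ∧
    (∀ i j, A (Sum.inl i) (Sum.inr j) = A (Sum.inl j) (Sum.inr i)) ∧
    (∀ i j, A (Sum.inr i) (Sum.inr j) = - A (Sum.inl j) (Sum.inl i)) := by
  have he : ∀ p q, (Aᵀ * stdSymplecticMatrix n) p q + (stdSymplecticMatrix n * A) p q = 0 := by
    intro p q
    rw [← Matrix.add_apply, h]
    rfl
  refine ⟨fun i j => ?_, fun i j => ?_, fun i j => ?_⟩
  · have := he (Sum.inl i) (Sum.inl j)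
    rw [mul_J_apply_inl, J_mul_apply_inl, Matrix.transpose_apply] at this
    linear_combination this
  · have := he (Sum.inr i) (Sum.inr j)
    rw [mul_J_apply_inr, J_mul_apply_inr, Matrix.transpose_apply] at this
    linear_combination -this
  · have := he (Sum.inl i) (Sum.inr j)
    rw [mul_J_apply_inr, J_mul_apply_inl, Matrix.transpose_apply] at this
    linear_combination this

/-- the weight function of the regular diagonal element -/
noncomputable def hw (n : ℕ) : Fin n ⊕ Fin n → ℂ :=
  Sum.elim (fun i => (i : ℕ) + 1) (fun i => -((i : ℕ) + 1))

lemma hw_sub_ne (p q : Fin n ⊕ Fin n) (hpq : p ≠ q) : hw n p - hw n q ≠ 0 := by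
  rcases p with i | i <;> rcases q with j | j <;> intro hz <;> apply hpq
  · have h3 : ((i : ℕ) : ℂ) = (j : ℕ) := by
      simp only [hw, Sum.elim_inl] at hz; linear_combination hz
    have : (i : ℕ) = (j : ℕ) := by exact_mod_cast h3
    exact congrArg Sum.inl (Fin.ext this)
  · exfalso
    have h2 : (((i : ℕ) + (j : ℕ) + 2 : ℕ) : ℂ) = 0 := by
      simp only [hw, Sum.elim_inl, Sum.elim_inr] at hz
      push_cast
      linear_combination hz
    have h4 : (i : ℕ) + (j : ℕ) + 2 = 0 := by exact_mod_cast h2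
    omega
  · exfalso
    have h2 : (((i : ℕ) + (j : ℕ) + 2 : ℕ) : ℂ) = 0 := by
      simp only [hw, Sum.elim_inl, Sum.elim_inr] at hz
      push_cast
      linear_combination -hz
    have h4 : (i : ℕ) + (j : ℕ) + 2 = 0 := by exact_mod_cast h2
    omega
  · have h3 : ((i : ℕ) : ℂ) = (j : ℕ) := by
      simp only [hw, Sum.elim_inr] at hz; linear_combination -hz
    have : (i : ℕ) = (j : ℕ) := by exact_mod_cast h3
    exact congrArg Sum.inr (Fin.ext this)

/-- any element of sp with zero diagonal is a commutator with a regular diagonal element -/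
lemma exists_commutator_of_diag_zero (A' : SMat n)
    (hsp : A'ᵀ * stdSymplecticMatrix n + stdSymplecticMatrix n * A' = 0)
    (hdiag : ∀ p, A' p p = 0) :
    ∃ H Y : SMat n, Hᵀ * stdSymplecticMatrix n + stdSymplecticMatrix n * H = 0 ∧
      Yᵀ * stdSymplecticMatrix n + stdSymplecticMatrix n * Y = 0 ∧
      H * Y - Y * H = A' := by
  obtain ⟨hs1, hs2, hs3⟩ := sp_rel hsp
  set H : SMat n := Matrix.diagonal (hw n) with hH
  set Y : SMat n := Matrix.of (fun p q => A' p q / (hw n p - hw n q)) with hY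
  have hYapp : ∀ p q, Y p q = A' p q / (hw n p - hw n q) := fun p q => rfl
  refine ⟨H, Y, ?_, ?_, ?_⟩
  · -- H in sp
    ext p q
    rcases p with i | i <;> rcases q with j | j <;>
      simp only [Matrix.add_apply, mul_J_apply_inl, mul_J_apply_inr,
        J_mul_apply_inl, J_mul_apply_inr, Matrix.transpose_apply, hH, Matrix.zero_apply,
        Matrix.diagonal_apply] <;> split_ifs with hij <;>
      simp_all [hw] <;> ring
  · -- Y in sp
    ext p q
    rcases p with i | i <;> rcases q with j | j <;>
      simp only [Matrix.add_apply, mul_J_apply_inl, mul_J_apply_inr,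
        J_mul_apply_inl, J_mul_apply_inr, Matrix.transpose_apply, Matrix.zero_apply, hYapp]
    · rw [hs1 i j]
      have hd : hw n (Sum.inr j) - hw n (Sum.inl i) = hw n (Sum.inr i) - hw n (Sum.inl j) := by
        simp [hw]; ring
      rw [hd]; ring
    · rw [hs3 i j]
      have hd : hw n (Sum.inr i) - hw n (Sum.inr j) = hw n (Sum.inl j) - hw n (Sum.inl i) := by
        simp [hw]; ring
      rw [hd]; ring
    · rw [hs3 j i]
      have hd : hw n (Sum.inr j) - hw n (Sum.inr i) = hw n (Sum.inl i) - hw n (Sum.inl j) := by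
        simp [hw]; ring
      rw [hd]; ring
    · rw [hs2 i j]
      have hd : hw n (Sum.inl j) - hw n (Sum.inr i) = hw n (Sum.inl i) - hw n (Sum.inr j) := by
        simp [hw]; ring
      rw [hd]; ring
  · -- commutator
    ext p q
    rw [Matrix.sub_apply, hH, Matrix.diagonal_mul, Matrix.mul_diagonal, hYapp]
    by_cases hpq : p = q
    · subst hpq
      simp [hdiag p]
    · have hd := hw_sub_ne p q hpq
      field_simp

noncomputable def Mmat (a b c d : Fin n → ℂ) : SMat n :=
  Matrix.fromBlocks (diagonal a) (diagonal b) (diagonal c) (diagonal d)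

lemma Mmat_mul (a b c d a' b' c' d' : Fin n → ℂ) :
    Mmat a b c d * Mmat a' b' c' d' =
    Mmat (fun i => a i * a' i + b i * c' i) (fun i => a i * b' i + b i * d' i)
         (fun i => c i * a' i + d i * c' i) (fun i => c i * b' i + d i * d' i) := by
  simp only [Mmat, Matrix.fromBlocks_multiply, diagonal_mul_diagonal, diagonal_add]

lemma Mmat_transpose (a b c d : Fin n → ℂ) :
    (Mmat a b c d)ᵀ = Mmat a c b d := by
  simp [Mmat, Matrix.fromBlocks_transpose, Matrix.diagonal_transpose]

lemma J_eq : stdSymplecticMatrix n = Mmat (fun _ => 0) (fun _ => 1) (fun _ => -1) (fun _ => 0) := by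
  ext p q
  rcases p with i | i <;> rcases q with j | j <;>
    simp [stdSymplecticMatrix, Mmat, Matrix.diagonal, Matrix.one_apply, eq_comm] <;>
    split <;> simp

lemma Mmat_one : (Mmat (fun _ => 1) (fun _ => 0) (fun _ => 0) (fun _ => 1) : SMat n) = 1 := by
  simp only [Mmat, Matrix.diagonal_zero, Matrix.diagonal_one, Matrix.fromBlocks_one]

lemma Mmat_ext {a b c d a' b' c' d' : Fin n → ℂ} (h1 : ∀ i, a i = a' i) (h2 : ∀ i, b i = b' i)
    (h3 : ∀ i, c i = c' i) (h4 : ∀ i, d i = d' i) :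
    Mmat a b c d = Mmat a' b' c' d' := by
  unfold Mmat
  rw [funext h1, funext h2, funext h3, funext h4]

lemma Mmat_mul_apply_inl (a b c d : Fin n → ℂ) (X : SMat n) (i : Fin n) (q : Fin n ⊕ Fin n) :
    (Mmat a b c d * X) (Sum.inl i) q = a i * X (Sum.inl i) q + b i * X (Sum.inr i) q := by
  simp [Mmat, Matrix.mul_apply, Fintype.sum_sum_type, Matrix.diagonal_apply, ite_mul]

lemma Mmat_mul_apply_inr (a b c d : Fin n → ℂ) (X : SMat n) (i : Fin n) (q : Fin n ⊕ Fin n) :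
    (Mmat a b c d * X) (Sum.inr i) q = c i * X (Sum.inl i) q + d i * X (Sum.inr i) q := by
  simp [Mmat, Matrix.mul_apply, Fintype.sum_sum_type, Matrix.diagonal_apply, ite_mul]

lemma mul_Mmat_apply_inl (a b c d : Fin n → ℂ) (X : SMat n) (p : Fin n ⊕ Fin n) (j : Fin n) :
    (X * Mmat a b c d) p (Sum.inl j) = X p (Sum.inl j) * a j + X p (Sum.inr j) * c j := by
  simp [Mmat, Matrix.mul_apply, Fintype.sum_sum_type, Matrix.diagonal_apply, mul_ite]

lemma mul_Mmat_apply_inr (a b c d : Fin n → ℂ) (X : SMat n) (p : Fin n ⊕ Fin n) (j : Fin n) :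
    (X * Mmat a b c d) p (Sum.inr j) = X p (Sum.inl j) * b j + X p (Sum.inr j) * d j := by
  simp [Mmat, Matrix.mul_apply, Fintype.sum_sum_type, Matrix.diagonal_apply, mul_ite]

/-- conjugation by a symplectic matrix preserves sp -/
lemma conj_sp {M N K : SMat n}
    (hMtJM : Mᵀ * stdSymplecticMatrix n * M = stdSymplecticMatrix n)
    (hMN : M * N = 1) (hNM : N * M = 1)
    (hK : Kᵀ * stdSymplecticMatrix n + stdSymplecticMatrix n * K = 0) :
    (M * K * N)ᵀ * stdSymplecticMatrix n + stdSymplecticMatrix n * (M * K * N) = 0 := by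
  have e1 : Mᵀ * stdSymplecticMatrix n = stdSymplecticMatrix n * N := by
    calc Mᵀ * stdSymplecticMatrix n = Mᵀ * stdSymplecticMatrix n * (M * N) := by
          rw [hMN, Matrix.mul_one]
      _ = (Mᵀ * stdSymplecticMatrix n * M) * N := by simp only [Matrix.mul_assoc]
      _ = stdSymplecticMatrix n * N := by rw [hMtJM]
  have e2 : stdSymplecticMatrix n * M = Nᵀ * stdSymplecticMatrix n := by
    calc stdSymplecticMatrix n * M = 1 * (stdSymplecticMatrix n * M) := by
          rw [Matrix.one_mul]
      _ = (Nᵀ * Mᵀ) * (stdSymplecticMatrix n * M) := by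
          rw [← Matrix.transpose_mul, hMN, Matrix.transpose_one]
      _ = Nᵀ * (Mᵀ * stdSymplecticMatrix n * M) := by simp only [Matrix.mul_assoc]
      _ = Nᵀ * stdSymplecticMatrix n := by rw [hMtJM]
  calc (M * K * N)ᵀ * stdSymplecticMatrix n + stdSymplecticMatrix n * (M * K * N)
      = Nᵀ * (Kᵀ * (Mᵀ * stdSymplecticMatrix n)) + (stdSymplecticMatrix n * M) * (K * N) := by
        simp only [Matrix.transpose_mul, Matrix.mul_assoc]
    _ = Nᵀ * (Kᵀ * (stdSymplecticMatrix n * N)) + (Nᵀ * stdSymplecticMatrix n) * (K * N) := by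
        rw [e1, e2]
    _ = Nᵀ * ((Kᵀ * stdSymplecticMatrix n + stdSymplecticMatrix n * K) * N) := by
        simp only [Matrix.add_mul, Matrix.mul_add, Matrix.mul_assoc]
    _ = 0 := by rw [hK]; simp

end SpAux

open SpAux in
theorem stmt_15 (n : ℕ) (hn : 1 ≤ n)
    (A : Matrix (Fin n ⊕ Fin n) (Fin n ⊕ Fin n) ℂ)
    (hA : Aᵀ * stdSymplecticMatrix n + stdSymplecticMatrix n * A = 0) :
    ∃ X Y : Matrix (Fin n ⊕ Fin n) (Fin n ⊕ Fin n) ℂ,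
      Xᵀ * stdSymplecticMatrix n + stdSymplecticMatrix n * X = 0 ∧
      Yᵀ * stdSymplecticMatrix n + stdSymplecticMatrix n * Y = 0 ∧
      X * Y - Y * X = A := by
  classical
  set J : SMat n := stdSymplecticMatrix n with hJdef
  -- the symmetric matrix S with A = J * S
  set S : SMat n := -(J * A) with hSdef
  have hJS : J * S = A := by
    rw [hSdef, Matrix.mul_neg, ← Matrix.mul_assoc, J_mul_J]
    simp
  have hS : Sᵀ = S := by
    rw [hSdef, Matrix.transpose_neg, Matrix.transpose_mul, Jmat_transpose]
    have hAJ : Aᵀ * J = -(J * A) := eq_neg_of_add_eq_zero_left hA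
    rw [Matrix.mul_neg, hAJ]
    simp
  have hSsym : ∀ p q, S p q = S q p := by
    intro p q
    conv_rhs => rw [← hS]
    rfl
  -- the per-pair data
  set α : Fin n → ℂ := fun i => S (Sum.inl i) (Sum.inl i) with hα
  set β : Fin n → ℂ := fun i => S (Sum.inl i) (Sum.inr i) with hβ
  set γ : Fin n → ℂ := fun i => S (Sum.inr i) (Sum.inr i) with hγ
  set a : Fin n → ℂ := fun _ => 1 with ha
  set b : Fin n → ℂ := fun i => if α i ≠ 0 then -β i / α i else if γ i ≠ 0 then 0 else 1 with hb
  set c : Fin n → ℂ := fun i =>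
    if α i ≠ 0 then 0 else if γ i ≠ 0 then -β i / γ i else -(1/2) with hc
  set d : Fin n → ℂ := fun i => if α i ≠ 0 then 1 else if γ i ≠ 0 then 1 else 1/2 with hd
  have h1 : ∀ i, a i * d i - b i * c i = 1 := by
    intro i
    by_cases hαi : α i = 0 <;> by_cases hγi : γ i = 0 <;>
      simp [ha, hb, hc, hd, hαi, hγi] <;> norm_num
  have h2 : ∀ i, a i * b i * α i + (a i * d i + b i * c i) * β i + c i * d i * γ i = 0 := by
    intro i
    by_cases hαi : α i = 0 <;> by_cases hγi : γ i = 0 <;>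
      simp [ha, hb, hc, hd, hαi, hγi] <;> field_simp
  set M : SMat n := Mmat a b c d with hM
  set N : SMat n := Mmat d (fun i => -b i) (fun i => -c i) a with hN
  have hMN : M * N = 1 := by
    rw [hM, hN, Mmat_mul, ← Mmat_one]
    exact Mmat_ext (fun i => by linear_combination h1 i) (fun i => by ring)
      (fun i => by ring) (fun i => by linear_combination h1 i)
  have hNM : N * M = 1 := by
    rw [hM, hN, Mmat_mul, ← Mmat_one]
    exact Mmat_ext (fun i => by linear_combination h1 i) (fun i => by ring)
      (fun i => by ring) (fun i => by linear_combination h1 i)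
  have hMtJM : Mᵀ * J * M = J := by
    rw [hM, hJdef, Mmat_transpose, J_eq, Mmat_mul, Mmat_mul]
    exact Mmat_ext (fun i => by ring) (fun i => by linear_combination h1 i)
      (fun i => by linear_combination -h1 i) (fun i => by ring)
  have hMJMt : M * J * Mᵀ = J := by
    rw [hM, hJdef, Mmat_transpose, J_eq, Mmat_mul, Mmat_mul]
    exact Mmat_ext (fun i => by ring) (fun i => by linear_combination h1 i)
      (fun i => by linear_combination -h1 i) (fun i => by ring)
  -- the transformed symmetric matrix
  set T : SMat n := Mᵀ * S * M with hT
  have hTt : Tᵀ = T := by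
    rw [hT, Matrix.transpose_mul, Matrix.transpose_mul, Matrix.transpose_transpose, hS,
      Matrix.mul_assoc]
  have hT0 : ∀ i, T (Sum.inl i) (Sum.inr i) = 0 := by
    intro i
    have h2' := h2 i
    simp only [hα, hβ, hγ] at h2'
    rw [hT, mul_Mmat_apply_inr, hM, Mmat_transpose, Mmat_mul_apply_inl, Mmat_mul_apply_inl,
      hSsym (Sum.inr i) (Sum.inl i)]
    linear_combination h2'
  -- the conjugated matrix, in sp with zero diagonal
  set A' : SMat n := J * T with hA'
  have hA'sp : A'ᵀ * J + J * A' = 0 := by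
    have hA't : A'ᵀ = -(T * J) := by
      rw [hA', Matrix.transpose_mul, hTt, hJdef, Jmat_transpose, Matrix.mul_neg]
    rw [hA', hA't]
    calc -(T * J) * J + J * (J * T) = -(T * (J * J)) + (J * J) * T := by
          simp only [Matrix.mul_assoc, Matrix.neg_mul]
      _ = 0 := by rw [hJdef, J_mul_J]; simp
  have hdiag : ∀ p, A' p p = 0 := by
    intro p
    rcases p with i | i
    · rw [hA', hJdef, J_mul_apply_inl]
      have : T (Sum.inr i) (Sum.inl i) = T (Sum.inl i) (Sum.inr i) := by
        conv_lhs => rw [← hTt]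
        rfl
      rw [this, hT0]
    · rw [hA', hJdef, J_mul_apply_inr, hT0]
      simp
  -- get the commutator for A'
  obtain ⟨H, Y, hHsp, hYsp, hHY⟩ := exists_commutator_of_diag_zero A'
    (by rw [← hJdef]; exact hA'sp) hdiag
  -- conjugate back
  refine ⟨M * H * N, M * Y * N, ?_, ?_, ?_⟩
  · exact conj_sp (by rw [← hJdef]; exact hMtJM) hMN hNM hHsp
  · exact conj_sp (by rw [← hJdef]; exact hMtJM) hMN hNM hYsp
  · have e : ∀ P Q : SMat n, (M * P * N) * (M * Q * N) = M * (P * Q) * N := by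
      intro P Q
      calc (M * P * N) * (M * Q * N) = M * P * (N * M) * (Q * N) := by
            simp only [Matrix.mul_assoc]
        _ = M * (P * Q) * N := by rw [hNM, Matrix.mul_one]; simp only [Matrix.mul_assoc]
    rw [e, e, ← Matrix.sub_mul, ← Matrix.mul_sub, hHY]
    calc M * A' * N = (M * J * Mᵀ) * S * (M * N) := by
          rw [hA', hT]
          simp only [Matrix.mul_assoc]
      _ = J * S := by rw [hMJMt, hMN, Matrix.mul_one]
      _ = A := hJS
end
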